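/- arXiv:1905.08098 — 7 statements merged into one kernel-verified Lean document; each statement's English description precedes it below -/
import Mathlib

section
/- For all positive integers p and q with p ≥ q, the covering radius of the (p,q)-type group G_{p,q} in S_{p+q} equals p + ⌊(√(q + 1/8) − √2/2)² − 1/8⌋. -/
open Equiv

/-- The ℓ∞-distance between two permutations of `Fin n`. -/
noncomputable def linfDist {n : ℕ} (f g : Perm (Fin n)) : ℕ :=
  Finset.univ.sup fun i : Fin n => (((f i).val : ℤ) - ((g i).val : ℤ)).natAbs

/-- The distance from a permutation to a code `C`. -/
noncomputable def distToCode {n : ℕ} (f : Perm (Fin n)) (C : Set (Perm (Fin n))) : ℕ :=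
  sInf (linfDist f '' C)

/-- The covering radius of a code `C ⊆ Sₙ`. -/
noncomputable def coveringRadius {n : ℕ} (C : Set (Perm (Fin n))) : ℕ :=
  sSup (Set.range fun f : Perm (Fin n) => distToCode f C)

/-- The relabeling `C^π = π C π⁻¹`. -/
def conjCode {n : ℕ} (π : Perm (Fin n)) (C : Set (Perm (Fin n))) : Set (Perm (Fin n)) :=
  (fun g => π * g * π⁻¹) '' C

/-- Maximum covering radius over all relabelings. -/
noncomputable def Lmax {n : ℕ} (C : Set (Perm (Fin n))) : ℕ :=
  sSup (Set.range fun π : Perm (Fin n) => coveringRadius (conjCode π C))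

/-- Minimum covering radius over all relabelings. -/
noncomputable def Lmin {n : ℕ} (C : Set (Perm (Fin n))) : ℕ :=
  sInf (Set.range fun π : Perm (Fin n) => coveringRadius (conjCode π C))

/-- The `(p,q)`-type group `G_{p,q} = ⟨(1,…,p), (p+1,…,p+q)⟩ ⊆ S_{p+q}`
(using `0`-indexed `Fin (p+q)`). -/
def Gpq (p q : ℕ) : Subgroup (Perm (Fin (p + q))) :=
  Subgroup.closure
    { ((List.finRange p).map (Fin.castLE (Nat.le_add_right p q))).formPerm,
      ((List.finRange q).map (Fin.natAdd p)).formPerm }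

/-- The transitive cyclic group `Gₙ = ⟨(1,2,…,n)⟩`. -/
def Gcyc (n : ℕ) : Subgroup (Perm (Fin n)) := Subgroup.closure {finRotate n}

/-- The natural dihedral group
`Dₙ = ⟨(1,2,…,n), ∏_{i=1}^{⌊n/2⌋} (i, n-i)⟩` (using `0`-indexed `Fin n`). -/
def Dn (n : ℕ) : Subgroup (Perm (Fin n)) :=
  Subgroup.closure
    { finRotate n,
      (((List.finRange (n / 2)).map fun i =>
        Equiv.swap (⟨i.val, by have := i.isLt; omega⟩ : Fin n)
          (⟨n - 2 - i.val, by have := i.isLt; omega⟩ : Fin n)).prod) }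

namespace Stmt0Aux

open Finset

lemma mod_helper (m x y : ℕ) (hm : 0 < m) : (x + (m - y % m) + y) % m = x % m := by
  obtain ⟨d, hd⟩ := Nat.dvd_sub_mod (n := m) y
  have h1 : y % m < m := Nat.mod_lt _ hm
  have h2 : y % m ≤ y := Nat.mod_le y m
  have hmd : m * (d + 1) = m * d + m := by ring
  have key : x + (m - y % m) + y = x + m * (d + 1) := by omega
  rw [key, Nat.add_mul_mod_self_left]

lemma card_shift (m i k : ℕ) (hm : 0 < m) (hk : k ≤ m) :
    ((range m).filter fun a => (i + a) % m < k).card = k := by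
  have key : ∀ c, c < k → (i + (c + (m - i % m)) % m) % m = c := by
    intro c hc
    rw [Nat.add_mod_mod, Nat.add_comm i, mod_helper m c i hm,
      Nat.mod_eq_of_lt (lt_of_lt_of_le hc hk)]
  have hb := Finset.card_bij (fun (a : ℕ) (_ : a ∈ (range m).filter fun a => (i + a) % m < k)
      => (i + a) % m) ?_ ?_ ?_ (t := range k)
  · rw [hb, card_range]
  · intro a ha
    simp only [mem_filter, mem_range] at ha
    exact mem_range.mpr ha.2
  · intro a1 ha1 a2 ha2 h
    simp only [mem_filter, mem_range] at ha1 ha2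
    have : a1 % m = a2 % m := Nat.ModEq.add_left_cancel' i h
    rwa [Nat.mod_eq_of_lt ha1.1, Nat.mod_eq_of_lt ha2.1] at this
  · intro c hc
    have hc' := mem_range.mp hc
    refine ⟨(c + (m - i % m)) % m, ?_, key c hc'⟩
    simp only [mem_filter, mem_range]
    exact ⟨Nat.mod_lt _ hm, by rw [key c hc']; exact hc'⟩

lemma exists_good (m : ℕ) (hm : 0 < m) (D : Finset ℕ) (B : ℕ → Finset ℕ)
    (h : ∑ i ∈ D, (B i).card < m) : ∃ a, a < m ∧ ∀ i ∈ D, a ∉ B i := by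
  by_contra hc
  push_neg at hc
  have hsub : range m ⊆ D.biUnion B := by
    intro a ha
    obtain ⟨i, hi, hai⟩ := hc a (mem_range.mp ha)
    exact mem_biUnion.mpr ⟨i, hi, hai⟩
  have h2 := (card_le_card hsub).trans card_biUnion_le
  rw [card_range] at h2
  omega

lemma sum_lt (t q : ℕ) (h2q : (t - 1) * t < 2 * q) (D : Finset ℕ) (k : ℕ → ℕ)
    (hinj : ∀ i ∈ D, ∀ j ∈ D, k i = k j → i = j)
    (hlb : ∀ i ∈ D, 1 ≤ k i) (hub : ∀ i ∈ D, k i ≤ t - 1) :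
    ∑ i ∈ D, k i < q := by
  have h1 : ∑ v ∈ D.image k, v = ∑ i ∈ D, k i := Finset.sum_image hinj
  have h2 : D.image k ⊆ Finset.range t := by
    intro v hv
    obtain ⟨i, hi, rfl⟩ := Finset.mem_image.mp hv
    have := hlb i hi; have := hub i hi
    exact mem_range.mpr (by omega)
  have h3 : ∑ v ∈ D.image k, v ≤ ∑ v ∈ range t, v := Finset.sum_le_sum_of_subset h2
  have h5 := Finset.sum_range_id_mul_two t
  have h6 : t * (t - 1) = (t - 1) * t := Nat.mul_comm _ _
  omega

variable (p q : ℕ)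

def l1 : List (Fin (p + q)) := (List.finRange p).map (Fin.castLE (Nat.le_add_right p q))
def l2 : List (Fin (p + q)) := (List.finRange q).map (Fin.natAdd p)

lemma l1_def : l1 p q = (List.finRange p).map (Fin.castLE (Nat.le_add_right p q)) := rfl
lemma l2_def : l2 p q = (List.finRange q).map (Fin.natAdd p) := rfl

lemma Gpq_eq : Gpq p q = Subgroup.closure {(l1 p q).formPerm, (l2 p q).formPerm} := by
  unfold Gpq
  rw [l1_def, l2_def]

lemma l1_length : (l1 p q).length = p := by simp [l1]
lemma l2_length : (l2 p q).length = q := by simp [l2]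

lemma l1_nodup : (l1 p q).Nodup :=
  (List.nodup_finRange p).map (Fin.castLE_injective _)

lemma l2_nodup : (l2 p q).Nodup := by
  refine (List.nodup_finRange q).map ?_
  intro a b h
  have : (Fin.natAdd p a).val = (Fin.natAdd p b).val := by rw [h]
  simp only [Fin.coe_natAdd] at this
  exact Fin.ext (by omega)

lemma l1_getElem (i : ℕ) (h : i < (l1 p q).length) :
    ((l1 p q)[i]).val = i := by
  simp [l1]

lemma l2_getElem (i : ℕ) (h : i < (l2 p q).length) :
    ((l2 p q)[i]).val = p + i := by
  simp [l2]

lemma mem_l1 (x : Fin (p + q)) : x ∈ l1 p q ↔ x.val < p := by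
  simp only [l1, List.mem_map, List.mem_finRange, true_and]
  constructor
  · rintro ⟨a, rfl⟩; exact a.isLt
  · intro h; exact ⟨⟨x.val, h⟩, Fin.ext rfl⟩

lemma mem_l2 (x : Fin (p + q)) : x ∈ l2 p q ↔ p ≤ x.val := by
  simp only [l2, List.mem_map, List.mem_finRange, true_and]
  constructor
  · rintro ⟨a, rfl⟩; simp [Fin.le_def]
  · intro h
    refine ⟨⟨x.val - p, by omega⟩, Fin.ext ?_⟩
    simp; omega

lemma sigma_pow_low (a : ℕ) (i : Fin (p + q)) (hi : i.val < p) :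
    (((l1 p q).formPerm ^ a) i).val = (i.val + a) % p := by
  have h := List.formPerm_pow_apply_getElem (l1 p q) (l1_nodup p q) a i.val
    (by rw [l1_length]; exact hi)
  have h1 : (l1 p q)[i.val]'(by rw [l1_length]; exact hi) = i :=
    Fin.ext (l1_getElem p q i.val _)
  rw [h1] at h
  rw [h, l1_getElem]
  congr 1
  rw [l1_length]

lemma sigma_pow_high (a : ℕ) (i : Fin (p + q)) (hi : p ≤ i.val) :
    ((l1 p q).formPerm ^ a) i = i :=
  Equiv.Perm.pow_apply_eq_self_of_apply_eq_self
    (List.formPerm_apply_of_notMem (by rw [mem_l1]; omega)) a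

lemma tau_pow_high (b : ℕ) (i : Fin (p + q)) (hi : p ≤ i.val) :
    (((l2 p q).formPerm ^ b) i).val = p + ((i.val - p) + b) % q := by
  have hj : i.val - p < q := by have := i.isLt; omega
  have h := List.formPerm_pow_apply_getElem (l2 p q) (l2_nodup p q) b (i.val - p)
    (by rw [l2_length]; exact hj)
  have h1 : (l2 p q)[i.val - p]'(by rw [l2_length]; exact hj) = i :=
    Fin.ext (by rw [l2_getElem]; omega)
  rw [h1] at h
  rw [h, l2_getElem]
  congr 2
  rw [l2_length]

lemma tau_pow_low (b : ℕ) (i : Fin (p + q)) (hi : i.val < p) :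
    ((l2 p q).formPerm ^ b) i = i :=
  Equiv.Perm.pow_apply_eq_self_of_apply_eq_self
    (List.formPerm_apply_of_notMem (by rw [mem_l2]; omega)) b

lemma mem_Gpq (a b : ℕ) : (l1 p q).formPerm ^ a * (l2 p q).formPerm ^ b ∈ Gpq p q := by
  rw [Gpq_eq]
  apply mul_mem
  · exact pow_mem (Subgroup.subset_closure (Set.mem_insert _ _)) a
  · exact pow_mem (Subgroup.subset_closure (Set.mem_insert_of_mem _ (Set.mem_singleton _))) b

lemma Gpq_high (hq : 0 < q) {g : Perm (Fin (p + q))} (hg : g ∈ Gpq p q) :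
    ∃ b, ∀ i : Fin (p + q), p ≤ i.val → (g i).val = p + ((i.val - p) + b) % q := by
  rw [Gpq_eq] at hg
  have hg2 := hg
  clear hg
  refine Subgroup.closure_induction
    (p := fun x _ => ∃ b, ∀ i : Fin (p + q), p ≤ i.val →
      (x i).val = p + ((i.val - p) + b) % q) ?_ ?_ ?_ ?_ hg2
  · rintro x hx
    simp only [Set.mem_insert_iff, Set.mem_singleton_iff] at hx
    rcases hx with rfl | rfl
    · refine ⟨0, fun i hi => ?_⟩
      have hfix : (l1 p q).formPerm i = i :=
        List.formPerm_apply_of_notMem (by rw [mem_l1]; omega)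
      have hlt : i.val - p < q := by have := i.isLt; omega
      rw [hfix, Nat.add_zero, Nat.mod_eq_of_lt hlt]
      omega
    · refine ⟨1, fun i hi => ?_⟩
      have h := tau_pow_high p q 1 i hi
      rw [pow_one] at h
      exact h
  · refine ⟨0, fun i hi => ?_⟩
    have hlt : i.val - p < q := by have := i.isLt; omega
    rw [Nat.add_zero, Nat.mod_eq_of_lt hlt]
    simp only [Perm.one_apply]
    omega
  · rintro x y hx hy ⟨bx, hbx⟩ ⟨by', hby⟩
    refine ⟨by' + bx, fun i hi => ?_⟩
    have h1 := hby i hi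
    have h2 : p ≤ (y i).val := by rw [h1]; omega
    have h3 := hbx (y i) h2
    rw [Perm.mul_apply, h3, h1]
    rw [Nat.add_sub_cancel_left, Nat.mod_add_mod, Nat.add_assoc]
  · rintro x hx ⟨b, hb⟩
    refine ⟨q - b % q, fun i hi => ?_⟩
    set j := i.val - p with hjdef
    have hjlt : j < q := by have := i.isLt; omega
    set j' := (j + (q - b % q)) % q with hj'def
    have hj'lt : j' < q := Nat.mod_lt _ hq
    set i' : Fin (p + q) := ⟨p + j', by omega⟩ with hi'def
    have hgi' : x i' = i := by
      apply Fin.ext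
      rw [hb i' (by simp [hi'def])]
      show p + ((p + j' - p) + b) % q = i.val
      have h4 : p + j' - p = j' := by omega
      rw [h4, hj'def, Nat.mod_add_mod, mod_helper q j b hq, Nat.mod_eq_of_lt hjlt]
      omega
    have h5 : x⁻¹ i = i' := by rw [← hgi']; simp
    rw [h5]

end Stmt0Aux


/-- For all positive integers `p ≥ q`, the covering radius of `G_{p,q}` in
`S_{p+q}` equals `p + ⌊(√(q + 1/8) − √2/2)² − 1/8⌋`. -/
theorem stmt_0 (p q : ℕ) (hq : 1 ≤ q) (hpq : q ≤ p) :
    (coveringRadius (Gpq p q : Set (Perm (Fin (p + q)))) : ℤ) =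
      (p : ℤ) + ⌊(Real.sqrt ((q : ℝ) + 1 / 8) - Real.sqrt 2 / 2) ^ 2 - 1 / 8⌋ := by
  classical
  have hp : 0 < p := le_trans hq hpq
  have hq0 : 0 < q := hq
  -- the minimal t with 2q ≤ t(t+1)
  have hPex : ∃ t : ℕ, 2 * q ≤ t * (t + 1) := ⟨2 * q, by nlinarith⟩
  set t := Nat.find hPex with htdef
  have ht1 : 2 * q ≤ t * (t + 1) := Nat.find_spec hPex
  have ht0 : 1 ≤ t := by
    rcases Nat.eq_zero_or_pos t with h | h
    · rw [h] at ht1; simp at ht1; omega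
    · exact h
  have ht2 : (t - 1) * t < 2 * q := by
    have hmin := Nat.find_min hPex (show t - 1 < t by omega)
    push_neg at hmin
    have he : (t - 1) * ((t - 1) + 1) = (t - 1) * t := by congr 1; omega
    omega
  have htq : t ≤ q := Nat.find_le (by nlinarith)
  set R := p + (q - t) with hRdef
  -- ====================== UPPER BOUND ======================
  have upper : ∀ f : Perm (Fin (p + q)), distToCode f (↑(Gpq p q)) ≤ R := by
    intro f
    set fv : ℕ → ℕ := fun i => if h : i < p + q then (f ⟨i, h⟩).val else 0 with hfv
    have hfv_lt : ∀ i, i < p + q → fv i < p + q := by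
      intro i h
      simp only [hfv]
      rw [dif_pos h]
      exact (f ⟨i, h⟩).isLt
    have hfv_inj : ∀ i, i < p + q → ∀ j, j < p + q → fv i = fv j → i = j := by
      intro i hi j hj h
      simp only [hfv] at h
      rw [dif_pos hi, dif_pos hj] at h
      have h2 := f.injective (Fin.ext h)
      exact congrArg Fin.val h2
    have hfv_eq : ∀ i : Fin (p + q), fv i.val = (f i).val := by
      intro i
      simp only [hfv]
      rw [dif_pos i.isLt]
    -- choose the first-block shift a
    set Da := (Finset.range p).filter (fun i => R + 1 ≤ fv i) with hDa
    set ka : ℕ → ℕ := fun i => fv i - R with hka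
    set Ba : ℕ → Finset ℕ :=
      fun i => (Finset.range p).filter (fun x => (i + x) % p < ka i) with hBa
    have hsum_a : ∑ i ∈ Da, (Ba i).card < p := by
      have hcard : ∀ i ∈ Da, (Ba i).card = ka i := by
        intro i hi
        simp only [hDa, Finset.mem_filter, Finset.mem_range] at hi
        have h1 : fv i < p + q := hfv_lt i (by omega)
        exact Stmt0Aux.card_shift p i (ka i) hp (by simp only [hka]; omega)
      rw [Finset.sum_congr rfl hcard]
      have hlt := Stmt0Aux.sum_lt t q ht2 Da ka ?_ ?_ ?_
      · exact lt_of_lt_of_le hlt hpq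
      · intro i hi j hj h
        simp only [hDa, Finset.mem_filter, Finset.mem_range] at hi hj
        simp only [hka] at h
        exact hfv_inj i (by omega) j (by omega) (by omega)
      · intro i hi
        simp only [hDa, Finset.mem_filter, Finset.mem_range] at hi
        simp only [hka]; omega
      · intro i hi
        simp only [hDa, Finset.mem_filter, Finset.mem_range] at hi
        have h1 : fv i < p + q := hfv_lt i (by omega)
        simp only [hka]; omega
    obtain ⟨a, ha, hagood⟩ := Stmt0Aux.exists_good p hp Da Ba hsum_a
    -- choose the second-block shift b
    set Db := (Finset.range q).filter (fun j => fv (p + j) + 2 ≤ t) with hDb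
    set kb : ℕ → ℕ := fun j => t - 1 - fv (p + j) with hkb
    set Bb : ℕ → Finset ℕ :=
      fun j => (Finset.range q).filter
        (fun x => ¬ ((j + x) % q < q - t + fv (p + j) + 1)) with hBb
    have hsum_b : ∑ j ∈ Db, (Bb j).card < q := by
      have hcard : ∀ j ∈ Db, (Bb j).card = kb j := by
        intro j hj
        simp only [hDb, Finset.mem_filter, Finset.mem_range] at hj
        have h1 : Bb j = Finset.range q \
            ((Finset.range q).filter (fun x => (j + x) % q < q - t + fv (p + j) + 1)) := by
          simp only [hBb]
          exact Finset.filter_not _ _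
        rw [h1, Finset.card_sdiff_of_subset (Finset.filter_subset _ _), Finset.card_range,
          Stmt0Aux.card_shift q j _ hq0 (by omega)]
        simp only [hkb]; omega
      rw [Finset.sum_congr rfl hcard]
      refine Stmt0Aux.sum_lt t q ht2 Db kb ?_ ?_ ?_
      · intro i hi j hj h
        simp only [hDb, Finset.mem_filter, Finset.mem_range] at hi hj
        simp only [hkb] at h
        have := hfv_inj (p + i) (by omega) (p + j) (by omega) (by omega)
        omega
      · intro i hi
        simp only [hDb, Finset.mem_filter, Finset.mem_range] at hi
        simp only [hkb]; omega
      · intro i hi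
        simp only [hkb]; omega
    obtain ⟨b, hb, hbgood⟩ := Stmt0Aux.exists_good q hq0 Db Bb hsum_b
    set g := (Stmt0Aux.l1 p q).formPerm ^ a * (Stmt0Aux.l2 p q).formPerm ^ b with hgdef
    have hgmem : g ∈ Gpq p q := Stmt0Aux.mem_Gpq p q a b
    have hdist : linfDist f g ≤ R := by
      unfold linfDist
      apply Finset.sup_le
      intro i _
      show (((f i).val : ℤ) - ((g i).val : ℤ)).natAbs ≤ R
      have hfi := hfv_eq i
      by_cases hi : i.val < p
      · have h1 : (g i).val = (i.val + a) % p := by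
          rw [hgdef, Equiv.Perm.mul_apply, Stmt0Aux.tau_pow_low p q b i hi]
          exact Stmt0Aux.sigma_pow_low p q a i hi
        have hc : (i.val + a) % p < p := Nat.mod_lt _ hp
        by_cases hbig : R + 1 ≤ fv i.val
        · have hmem : i.val ∈ Da := by
            simp only [hDa, Finset.mem_filter, Finset.mem_range]
            exact ⟨hi, hbig⟩
          have hnb := hagood i.val hmem
          simp only [hBa, Finset.mem_filter, Finset.mem_range, not_and, not_lt] at hnb
          have hge := hnb ha
          simp only [hka] at hge
          have h2 : fv i.val < p + q := hfv_lt i.val (by omega)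
          omega
        · omega
      · have hpi : p ≤ i.val := not_lt.mp hi
        have h1 : (((Stmt0Aux.l2 p q).formPerm ^ b) i).val = p + ((i.val - p) + b) % q :=
          Stmt0Aux.tau_pow_high p q b i hpi
        have h2 : (g i).val = p + ((i.val - p) + b) % q := by
          rw [hgdef, Equiv.Perm.mul_apply,
            Stmt0Aux.sigma_pow_high p q a (((Stmt0Aux.l2 p q).formPerm ^ b) i) (by omega)]
          exact h1
        have hcq : ((i.val - p) + b) % q < q := Nat.mod_lt _ hq0
        have hflt : fv i.val < p + q := hfv_lt i.val i.isLt
        by_cases hsmall : fv i.val + 2 ≤ t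
        · have hmem : (i.val - p) ∈ Db := by
            simp only [hDb, Finset.mem_filter, Finset.mem_range]
            constructor
            · have := i.isLt; omega
            · rw [show p + (i.val - p) = i.val by omega]; exact hsmall
          have hnb := hbgood (i.val - p) hmem
          simp only [hBb, Finset.mem_filter, Finset.mem_range, not_and, not_not] at hnb
          have hc2 := hnb hb
          rw [show p + (i.val - p) = i.val by omega] at hc2
          omega
        · omega
    have hmem2 : linfDist f g ∈ linfDist f '' (↑(Gpq p q)) := ⟨g, hgmem, rfl⟩
    exact le_trans (Nat.sInf_le hmem2) hdist
  -- ====================== LOWER BOUND ======================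
  set L : ℕ → ℕ := fun k => ∑ m ∈ Finset.range k, (t - m) with hL
  have hLsucc : ∀ k, L (k + 1) = L k + (t - k) := by
    intro k; simp only [hL]; rw [Finset.sum_range_succ]
  have hL0 : L 0 = 0 := by simp [hL]
  have hLq : q ≤ L t := by
    have h1 : L t = (∑ j ∈ Finset.range t, j) + t := by
      have e1 : L t = ∑ j ∈ Finset.range t, (t - (t - 1 - j)) := by
        simp only [hL]
        exact (Finset.sum_range_reflect (fun m => t - m) t).symm
      have e2 : ∑ j ∈ Finset.range t, (t - (t - 1 - j)) = ∑ j ∈ Finset.range t, (j + 1) :=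
        Finset.sum_congr rfl (fun j hj => by
          have := Finset.mem_range.mp hj; omega)
      rw [e1, e2, Finset.sum_add_distrib, Finset.sum_const, Finset.card_range,
        smul_eq_mul, mul_one]
    have h2 := Finset.sum_range_id_mul_two t
    have h3 : ∀ u : ℕ, 1 ≤ u → u * (u + 1) = u * (u - 1) + 2 * u := by
      intro u hu
      obtain ⟨s, rfl⟩ : ∃ s, u = s + 1 := ⟨u - 1, by omega⟩
      simp only [Nat.add_sub_cancel]
      ring
    have h4 := h3 t ht0
    omega
  set L' : ℕ → ℕ := fun k => ∑ m ∈ Finset.range k, (t - 1 - m) with hL'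
  have hL'succ : ∀ k, L' (k + 1) = L' k + (t - 1 - k) := by
    intro k; simp only [hL']; rw [Finset.sum_range_succ]
  have hL'mono : Monotone L' := monotone_nat_of_le_succ (fun k => by rw [hL'succ]; omega)
  have hLL' : ∀ k, k ≤ t → L k = L' k + k := by
    intro k
    induction k with
    | zero => intro _; simp [hL, hL']
    | succ m ih =>
      intro hm
      rw [hLsucc, hL'succ, ih (by omega)]
      omega
  have hL't : L' t < q := by
    have h0 := hLL' t le_rfl
    have h1 : L t = (∑ j ∈ Finset.range t, j) + t := by
      have e1 : L t = ∑ j ∈ Finset.range t, (t - (t - 1 - j)) := by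
        simp only [hL]
        exact (Finset.sum_range_reflect (fun m => t - m) t).symm
      have e2 : ∑ j ∈ Finset.range t, (t - (t - 1 - j)) = ∑ j ∈ Finset.range t, (j + 1) :=
        Finset.sum_congr rfl (fun j hj => by
          have := Finset.mem_range.mp hj; omega)
      rw [e1, e2, Finset.sum_add_distrib, Finset.sum_const, Finset.card_range,
        smul_eq_mul, mul_one]
    have h2 := Finset.sum_range_id_mul_two t
    have h6 : t * (t - 1) = (t - 1) * t := Nat.mul_comm _ _
    omega
  set jf : ℕ → ℕ := fun k => (q - t + k + (q - L k % q)) % q with hjf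
  have hjlt : ∀ k, jf k < q := fun k => Nat.mod_lt _ hq0
  have hjmod : ∀ k, (jf k + L k) % q = (q - t + k) % q := by
    intro k
    simp only [hjf]
    rw [Nat.mod_add_mod, Stmt0Aux.mod_helper q (q - t + k) (L k) hq0]
  have hjb : ∀ k, k < t → ∀ b, L k ≤ b → b < L (k + 1) → b < q →
      (jf k + b) % q = q - t + k + (b - L k) := by
    intro k hk b hb1 hb2 hbq
    have hrb : k + (b - L k) ≤ t - 1 := by
      have := hLsucc k; omega
    have h1 : jf k + b = (jf k + L k) + (b - L k) := by omega
    rw [h1, ← Nat.mod_add_mod, hjmod k, Nat.mod_add_mod]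
    have h2 : q - t + k + (b - L k) < q := by omega
    exact Nat.mod_eq_of_lt h2
  have hjinj : ∀ k k', k < t → k' < t → jf k = jf k' → k = k' := by
    have key : ∀ k k', k < k' → k' < t → jf k ≠ jf k' := by
      intro k k' hkk' hk't heq
      have c1 : ((q - t + k) + L k') % q = ((q - t + k') + L k) % q := by
        calc ((q - t + k) + L k') % q
            = ((q - t + k) % q + L k') % q := by rw [Nat.mod_add_mod]
          _ = ((jf k + L k) % q + L k') % q := by rw [hjmod k]
          _ = (jf k + L k + L k') % q := by rw [Nat.mod_add_mod]
          _ = (jf k' + L k' + L k) % q := by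
              rw [heq, show jf k' + L k + L k' = jf k' + L k' + L k from by omega]
          _ = ((jf k' + L k') % q + L k) % q := by rw [Nat.mod_add_mod]
          _ = ((q - t + k') % q + L k) % q := by rw [hjmod k']
          _ = ((q - t + k') + L k) % q := by rw [Nat.mod_add_mod]
      have e1 : L k = L' k + k := hLL' k (by omega)
      have e2 : L k' = L' k' + k' := hLL' k' (by omega)
      have e3 : L' (k + 1) = L' k + (t - 1 - k) := hL'succ k
      have e4 : L' (k + 1) ≤ L' k' := hL'mono hkk'
      have e5 : L' k' ≤ L' t := hL'mono (le_of_lt hk't)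
      have hA : (q - t + k') + L k ≤ (q - t + k) + L k' := by omega
      have hdvd : q ∣ ((q - t + k) + L k') - ((q - t + k') + L k) :=
        (Nat.modEq_iff_dvd' hA).mp c1.symm
      have hle := Nat.le_of_dvd (by omega) hdvd
      omega
    intro k k' hk hk' heq
    rcases lt_trichotomy k k' with h | h | h
    · exact absurd heq (key k k' h hk')
    · exact h
    · exact absurd heq.symm (key k' k h hk)
  have hcover : ∀ b, b < q → ∃ k, k < t ∧ L k ≤ b ∧ b < L (k + 1) := by
    intro b hb
    have hP0 : L 0 ≤ b := by rw [hL0]; omega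
    set k := Nat.findGreatest (fun k => L k ≤ b) (t - 1) with hkdef
    have hspec : L k ≤ b :=
      Nat.findGreatest_spec (P := fun k => L k ≤ b) (m := 0) (Nat.zero_le _) hP0
    have hkle : k ≤ t - 1 := Nat.findGreatest_le _
    refine ⟨k, by omega, hspec, ?_⟩
    by_cases hkt : k = t - 1
    · have he : L ((t - 1) + 1) = L t := by congr 1; omega
      rw [hkt, he]; omega
    · have h5 : ¬ L (k + 1) ≤ b :=
        Nat.findGreatest_is_greatest (P := fun k => L k ≤ b) (n := t - 1) (k := k + 1)
          (by rw [← hkdef]; omega) (by omega)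
      omega
  -- the permutation f0
  set J : Fin t → Fin (p + q) := fun k => ⟨p + jf k.val, by have := hjlt k.val; omega⟩ with hJ
  have hJinj : Function.Injective J := by
    intro k k' h
    have h2 := congrArg Fin.val h
    simp only [hJ] at h2
    exact Fin.ext (hjinj k.val k'.val k.isLt k'.isLt (by omega))
  set V : Fin t → Fin (p + q) := fun k => ⟨k.val, by have h := k.isLt; omega⟩ with hV
  have hVinj : Function.Injective V := by
    intro k k' h
    have h2 := congrArg Fin.val h
    simp only [hV] at h2
    exact Fin.ext h2
  have hcardc : Fintype.card ↥(Set.range J)ᶜ = Fintype.card ↥(Set.range V)ᶜ := by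
    rw [Fintype.card_compl_set, Fintype.card_compl_set,
      Set.card_range_of_injective hJinj, Set.card_range_of_injective hVinj]
  set f0 : Perm (Fin (p + q)) :=
    (Equiv.Set.sumCompl (Set.range J)).symm.trans
      ((Equiv.sumCongr ((Equiv.ofInjective J hJinj).symm.trans (Equiv.ofInjective V hVinj))
        (Fintype.equivOfCardEq hcardc)).trans (Equiv.Set.sumCompl (Set.range V))) with hf0
  have hf0J : ∀ k : Fin t, f0 (J k) = V k := by
    intro k
    rw [hf0]
    simp only [Equiv.trans_apply]
    rw [Equiv.Set.sumCompl_symm_apply_of_mem (Set.mem_range_self k)]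
    simp only [Equiv.sumCongr_apply, Sum.map_inl, Equiv.trans_apply,
      Equiv.ofInjective_symm_apply]
    rw [Equiv.Set.sumCompl_apply_inl]
    rfl
  have hlow : R ≤ distToCode f0 (↑(Gpq p q)) := by
    unfold distToCode
    apply le_csInf
    · exact ⟨linfDist f0 1, 1, (Gpq p q).one_mem, rfl⟩
    · rintro d ⟨g, hgmem, rfl⟩
      obtain ⟨b, hbs⟩ := Stmt0Aux.Gpq_high p q hq0 hgmem
      set b0 := b % q with hb0def
      have hb0q : b0 < q := Nat.mod_lt _ hq0
      obtain ⟨k, hkt, hk1, hk2⟩ := hcover b0 hb0q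
      set i : Fin (p + q) := J ⟨k, hkt⟩ with hidef
      have hival : i.val = p + jf k := by rw [hidef, hJ]
      have hgi : (g i).val = p + (q - t + k + (b0 - L k)) := by
        rw [hbs i (by omega)]
        rw [hival, show p + jf k - p = jf k from by omega]
        have h2 : (jf k + b) % q = (jf k + b0) % q := by
          rw [hb0def, Nat.add_mod_mod]
        rw [h2, hjb k hkt b0 hk1 hk2 hb0q]
      have hf0i : (f0 i).val = k := by
        rw [hidef, hf0J]
      have hone := Finset.le_sup
        (f := fun i : Fin (p + q) => (((f0 i).val : ℤ) - ((g i).val : ℤ)).natAbs)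
        (Finset.mem_univ i)
      have hge : R ≤ (((f0 i).val : ℤ) - ((g i).val : ℤ)).natAbs := by
        rw [hf0i, hgi]
        have hkle : k ≤ t - 1 := by omega
        omega
      show R ≤ linfDist f0 g
      unfold linfDist
      omega
  -- ====================== COMBINE ======================
  have hbdd : ∀ x ∈ Set.range (fun f : Perm (Fin (p + q)) => distToCode f (↑(Gpq p q))),
      x ≤ R := by
    rintro x ⟨f, rfl⟩
    exact upper f
  have hcov : coveringRadius (↑(Gpq p q) : Set (Perm (Fin (p + q)))) = R := by
    unfold coveringRadius
    apply le_antisymm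
    · exact csSup_le (Set.range_nonempty _) hbdd
    · exact le_trans hlow (le_csSup ⟨R, fun x hx => hbdd x hx⟩ ⟨f0, rfl⟩)
  rw [hcov]
  -- ====================== ARITHMETIC ======================
  have hfloor : ⌊(Real.sqrt ((q : ℝ) + 1 / 8) - Real.sqrt 2 / 2) ^ 2 - 1 / 8⌋
      = (q : ℤ) - t := by
    have h18 : (0:ℝ) ≤ (q : ℝ) + 1 / 8 := by positivity
    have hx2 : Real.sqrt ((q:ℝ) + 1/8) ^ 2 = (q:ℝ) + 1/8 := Real.sq_sqrt h18
    have h22 : Real.sqrt 2 ^ 2 = 2 := Real.sq_sqrt (by norm_num)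
    have hprod : Real.sqrt 2 * Real.sqrt ((q:ℝ) + 1/8) = Real.sqrt (2 * ((q:ℝ) + 1/8)) :=
      (Real.sqrt_mul (by norm_num) _).symm
    have hexp : (Real.sqrt ((q : ℝ) + 1 / 8) - Real.sqrt 2 / 2) ^ 2 - 1/8
        = (q:ℝ) + 1/2 - Real.sqrt (2 * ((q:ℝ) + 1/8)) := by
      have e : (Real.sqrt ((q : ℝ) + 1 / 8) - Real.sqrt 2 / 2) ^ 2
          = Real.sqrt ((q:ℝ) + 1/8) ^ 2 - Real.sqrt 2 * Real.sqrt ((q:ℝ) + 1/8)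
            + Real.sqrt 2 ^ 2 / 4 := by ring
      rw [e, hx2, h22, hprod]; ring
    rw [hexp]
    have ht1' : 2 * (q:ℝ) ≤ (t:ℝ) * ((t:ℝ) + 1) := by exact_mod_cast ht1
    have ht0' : (1:ℝ) ≤ (t:ℝ) := by exact_mod_cast ht0
    have ht2' : ((t:ℝ) - 1) * (t:ℝ) < 2 * (q:ℝ) := by
      have h := ht2
      have hc : (((t - 1) * t : ℕ) : ℝ) < ((2 * q : ℕ) : ℝ) := by exact_mod_cast h
      push_cast [Nat.cast_sub ht0] at hc
      exact hc
    have hs_le : Real.sqrt (2 * ((q:ℝ) + 1/8)) ≤ (t:ℝ) + 1/2 := by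
      have h1 : 2 * ((q:ℝ) + 1/8) ≤ ((t:ℝ) + 1/2)^2 := by nlinarith
      calc Real.sqrt (2 * ((q:ℝ) + 1/8)) ≤ Real.sqrt (((t:ℝ) + 1/2)^2) :=
            Real.sqrt_le_sqrt h1
        _ = (t:ℝ) + 1/2 := Real.sqrt_sq (by positivity)
    have hs_gt : (t:ℝ) - 1/2 < Real.sqrt (2 * ((q:ℝ) + 1/8)) := by
      rw [Real.lt_sqrt (by linarith)]
      nlinarith
    rw [Int.floor_eq_iff]
    constructor
    · push_cast
      linarith
    · push_cast
      linarith
  rw [hfloor, hRdef]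
  push_cast [Nat.cast_sub htq]
  ring
end

section
/- For all positive integers p and q with p ≥ q, the covering radius of the (p,q)-type group G_{p,q} in S_{p+q} is at most p + ⌊(√(q + 1/8) − √2/2)² − 1/8⌋. -/
open Equiv

/-!
Fix `t` with `t(t-1) < 2q ≤ t(t+1)` and put `D = p + q - t`. Given `f`, we look for
`g = σ^a τ^b ∈ G_{p,q}`, with `σ, τ` the two generating cycles, such that `d(f, g) ≤ D`.
On the first block `g(i) ≤ p - 1 ≤ D` holds automatically and only `f(i) ≤ D + g(i)` can fail;
for a fixed `i` it fails for at most `f(i) - D` shifts `a`, and since `f` is a bijection these add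
up to at most `1 + 2 + ⋯ + (t-1) < p`, so some shift `a` works for every `i`. The second block is
symmetric, with at most `t - 1 - f(i)` bad shifts `b` for each `i`, fewer than `q` in total.
Finally `(√(q + 1/8) - √2/2)² - 1/8 = q + 1/2 - √(2q + 1/4) ≥ q - t` because
`2q ≤ t(t+1)`.
-/

open Finset

theorem linfDist_le_iff {n r : ℕ} {f g : Perm (Fin n)} :
    linfDist f g ≤ r ↔ ∀ i, (f i).val ≤ (g i).val + r ∧ (g i).val ≤ (f i).val + r := by
  simp only [linfDist, Finset.sup_le_iff, mem_univ, true_implies]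
  exact forall_congr' fun i => by omega

theorem coveringRadius_le_of_forall_exists {n r : ℕ} {C : Set (Perm (Fin n))}
    (h : ∀ f, ∃ g ∈ C, linfDist f g ≤ r) : coveringRadius C ≤ r := by
  refine csSup_le (Set.range_nonempty _) ?_
  rintro _ ⟨f, rfl⟩
  obtain ⟨g, hg, hfg⟩ := h f
  exact (Nat.sInf_le (Set.mem_image_of_mem (linfDist f) hg)).trans hfg

theorem exists_mem_forall_notMem_of_sum_card_lt {ι α : Type*} [DecidableEq α] {I : Finset ι}
    {s : Finset α} {t : ι → Finset α} (h : ∑ i ∈ I, #(t i) < #s) :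
    ∃ a ∈ s, ∀ i ∈ I, a ∉ t i := by
  obtain ⟨a, has, hat⟩ := exists_mem_notMem_of_card_lt_card (card_biUnion_le.trans_lt h)
  exact ⟨a, has, fun i hi hai => hat (mem_biUnion.2 ⟨i, hi, hai⟩)⟩

theorem card_filter_add_mod_le (k i : ℕ) (P : ℕ → Prop) [DecidablePred P] :
    #{a ∈ range k | P ((i + a) % k)} ≤ #{c ∈ range k | P c} := by
  refine card_le_card_of_injOn (fun a => (i + a) % k) (fun a ha => ?_) fun a ha b hb hab => ?_
  · simp only [coe_filter, mem_range, Set.mem_ofPred_eq] at ha ⊢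
    exact ⟨Nat.mod_lt _ (by omega), ha.2⟩
  · simp only [coe_filter, mem_range, Set.mem_ofPred_eq] at ha hb
    have := Nat.ModEq.add_left_cancel' i hab
    rwa [Nat.ModEq, Nat.mod_eq_of_lt ha.1, Nat.mod_eq_of_lt hb.1] at this

theorem sum_range_add_tsub (D t : ℕ) :
    ∑ x ∈ range (D + t), (x - D) = ∑ y ∈ range t, y := by
  rw [sum_range_add, sum_eq_zero fun x hx => by simp [(mem_range.1 hx).le]]
  simp

theorem sum_range_pred_tsub {t N : ℕ} (h : t ≤ N) :
    ∑ x ∈ range N, (t - 1 - x) = ∑ y ∈ range t, y := by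
  obtain ⟨m, rfl⟩ := Nat.exists_eq_add_of_le h
  rw [sum_range_add, sum_eq_zero (s := range m) fun x _ => by omega, add_zero]
  exact sum_range_reflect id t

theorem sum_perm_apply_val {n : ℕ} (f : Perm (Fin n)) (φ : ℕ → ℕ) :
    ∑ x, φ (f x).val = ∑ y ∈ range n, φ y :=
  (Equiv.sum_comp f (fun x => φ x.val)).trans (Fin.sum_univ_eq_sum_range φ n)

theorem formPerm_pow_apply_val {n c : ℕ} (l : List (Fin n))
    (hl : ∀ i (h : i < l.length), l[i].val = c + i) (a : ℕ) (x : Fin n) :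
    ((l.formPerm ^ a) x).val =
      if c ≤ x.val ∧ x.val < c + l.length then c + (x.val - c + a) % l.length else x.val := by
  have hmap : l.map Fin.val = List.range' c l.length :=
    List.ext_getElem (by simp) fun i h _ => by simp [hl]
  have hnd : l.Nodup := List.Nodup.of_map Fin.val (hmap ▸ List.nodup_range')
  split_ifs with hx
  · have hxl : x = l[x.val - c]'(by omega) := Fin.ext (by rw [hl]; omega)
    conv_lhs => rw [hxl]
    rw [List.formPerm_pow_apply_getElem l hnd, hl]
  · have hxl : x ∉ l := fun hmem => by
      obtain ⟨i, hi, rfl⟩ := List.getElem_of_mem hmem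
      exact hx (by rw [hl]; omega)
    rw [Perm.pow_apply_eq_self_of_apply_eq_self (List.formPerm_apply_of_notMem hxl)]

theorem le_of_mul_pred_lt_two_mul {t q : ℕ} (h : t * (t - 1) < 2 * q) : t ≤ q := by
  by_contra! hqt
  obtain ⟨s, rfl⟩ := Nat.exists_eq_add_of_lt hqt
  have : (q + 1) * q ≤ (q + s + 1) * (q + s + 1 - 1) := Nat.mul_le_mul (by omega) (by omega)
  nlinarith [Nat.le_mul_self q]

section Gpq

variable {p q : ℕ}

variable (p q) in
def leftCycle : Perm (Fin (p + q)) :=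
  ((List.finRange p).map (Fin.castLE (Nat.le_add_right p q))).formPerm

variable (p q) in
def rightCycle : Perm (Fin (p + q)) :=
  ((List.finRange q).map (Fin.natAdd p)).formPerm

theorem leftCycle_pow_mul_rightCycle_pow_mem (a b : ℕ) :
    leftCycle p q ^ a * rightCycle p q ^ b ∈ Gpq p q :=
  have hl : leftCycle p q ∈ Gpq p q := Subgroup.subset_closure (Set.mem_insert _ _)
  have hr : rightCycle p q ∈ Gpq p q := Subgroup.subset_closure (Set.mem_insert_of_mem _ rfl)
  mul_mem (pow_mem hl a) (pow_mem hr b)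

theorem leftCycle_pow_mul_rightCycle_pow_apply_val (a b : ℕ) (x : Fin (p + q)) :
    ((leftCycle p q ^ a * rightCycle p q ^ b) x).val =
      if x.val < p then (x.val + a) % p else p + (x.val - p + b) % q := by
  have hl := formPerm_pow_apply_val (c := 0)
    ((List.finRange p).map (Fin.castLE (Nat.le_add_right p q))) (by simp) a
  have hr := formPerm_pow_apply_val (c := p)
    ((List.finRange q).map (Fin.natAdd p)) (by simp) b
  simp only [List.length_map, List.length_finRange, zero_le, true_and, zero_add,
    Nat.sub_zero] at hl hr
  rw [Perm.mul_apply, leftCycle, hl, rightCycle, hr]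
  have := x.isLt
  by_cases hx : x.val < p
  · simp [hx, not_le.2 hx]
  · have : (p + (x.val - p + b) % q) < p ↔ False := by simp
    simp [hx, not_lt.1 hx, this]

theorem exists_shift_left (f : Perm (Fin (p + q))) {t : ℕ} (ht : t ≤ p + q)
    (htp : t * (t - 1) < 2 * p) :
    ∃ a < p, ∀ x : Fin (p + q), x.val < p → (f x).val ≤ p + q - t + (x.val + a) % p := by
  set D := p + q - t
  let bad : Fin (p + q) → Finset ℕ := fun x => {a ∈ range p | D + (x.val + a) % p < (f x).val}
  have hbad : ∀ x, #(bad x) ≤ (f x).val - D := fun x =>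
    (card_filter_add_mod_le p x.val (fun c => D + c < (f x).val)).trans <|
      (card_le_card fun c hc => by
        simp only [mem_filter, mem_range] at hc ⊢; omega).trans (card_range _).le
  have htotal : ∑ x ∈ univ.filter (·.val < p), #(bad x) < #(range p) := by
    have hsum : ∑ x, ((f x).val - D) = ∑ y ∈ range t, y := by
      rw [sum_perm_apply_val f (· - D), show p + q = D + t by omega, sum_range_add_tsub]
    have := sum_range_id_mul_two t
    calc ∑ x ∈ univ.filter (·.val < p), #(bad x)
        ≤ ∑ x, ((f x).val - D) :=
          (sum_le_sum fun x _ => hbad x).trans (sum_le_sum_of_subset (subset_univ _))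
      _ < #(range p) := by rw [card_range]; omega
  obtain ⟨a, ha, hgood⟩ := exists_mem_forall_notMem_of_sum_card_lt htotal
  refine ⟨a, mem_range.1 ha, fun x hx => ?_⟩
  have := hgood x (by simpa using hx)
  simp only [bad, mem_filter, not_and, not_lt] at this
  exact this ha

theorem exists_shift_right (f : Perm (Fin (p + q))) {t : ℕ} (ht : t ≤ q)
    (htq : t * (t - 1) < 2 * q) :
    ∃ b < q, ∀ x : Fin (p + q), p ≤ x.val →
      p + (x.val - p + b) % q ≤ p + q - t + (f x).val := by
  set D := p + q - t
  let bad : Fin (p + q) → Finset ℕ :=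
    fun x => {b ∈ range q | D + (f x).val < p + (x.val - p + b) % q}
  have hbad : ∀ x, #(bad x) ≤ t - 1 - (f x).val := fun x =>
    (card_filter_add_mod_le q (x.val - p) (fun c => D + (f x).val < p + c)).trans <|
      (card_le_card (t := Ioo (q - t + (f x).val) q) fun c hc => by
        simp only [mem_filter, mem_range, mem_Ioo] at hc ⊢; omega).trans
        (by rw [Nat.card_Ioo]; omega)
  have htotal : ∑ x ∈ univ.filter (p ≤ ·.val), #(bad x) < #(range q) := by
    have hsum : ∑ x, (t - 1 - (f x).val) = ∑ y ∈ range t, y := by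
      rw [sum_perm_apply_val f (t - 1 - ·), sum_range_pred_tsub (by omega)]
    have := sum_range_id_mul_two t
    calc ∑ x ∈ univ.filter (p ≤ ·.val), #(bad x)
        ≤ ∑ x, (t - 1 - (f x).val) :=
          (sum_le_sum fun x _ => hbad x).trans (sum_le_sum_of_subset (subset_univ _))
      _ < #(range q) := by rw [card_range]; omega
  obtain ⟨b, hb, hgood⟩ := exists_mem_forall_notMem_of_sum_card_lt htotal
  refine ⟨b, mem_range.1 hb, fun x hx => ?_⟩
  have := hgood x (by simpa using hx)
  simp only [bad, mem_filter, not_and, not_lt] at this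
  exact this hb

theorem coveringRadius_Gpq_le {t : ℕ} (htp : t * (t - 1) < 2 * p) (htq : t * (t - 1) < 2 * q) :
    coveringRadius (Gpq p q : Set (Perm (Fin (p + q)))) ≤ p + q - t := by
  have htp' := le_of_mul_pred_lt_two_mul htp
  have htq' := le_of_mul_pred_lt_two_mul htq
  refine coveringRadius_le_of_forall_exists fun f => ?_
  obtain ⟨a, ha, hleft⟩ := exists_shift_left f (by omega) htp
  obtain ⟨b, hb, hright⟩ := exists_shift_right f htq' htq
  refine ⟨_, leftCycle_pow_mul_rightCycle_pow_mem a b, linfDist_le_iff.2 fun x => ?_⟩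
  rw [leftCycle_pow_mul_rightCycle_pow_apply_val]
  have := (f x).isLt
  split_ifs with hx
  · have := Nat.mod_lt (x.val + a) (show 0 < p by omega)
    exact ⟨by have := hleft x hx; omega, by omega⟩
  · have := Nat.mod_lt (x.val - p + b) (show 0 < q by omega)
    exact ⟨by omega, by have := hright x (by omega); omega⟩

end Gpq

theorem exists_mul_pred_lt_le_mul_succ {q : ℕ} (hq : 1 ≤ q) :
    ∃ t, t * (t - 1) < 2 * q ∧ 2 * q ≤ t * (t + 1) := by
  have hex : ∃ t, 2 * q ≤ t * (t + 1) := ⟨q, by nlinarith⟩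
  refine ⟨Nat.find hex, ?_, Nat.find_spec hex⟩
  obtain ⟨s, hs⟩ : ∃ s, Nat.find hex = s + 1 :=
    Nat.exists_eq_succ_of_ne_zero fun h => by have := Nat.find_spec hex; rw [h] at this; omega
  have := Nat.find_min hex (show s < Nat.find hex by omega)
  rw [hs, Nat.add_sub_cancel, mul_comm]
  omega

theorem sub_le_floor_of_two_mul_le {q t : ℕ} (h : 2 * q ≤ t * (t + 1)) :
    (q : ℤ) - t ≤ ⌊(Real.sqrt ((q : ℝ) + 1 / 8) - Real.sqrt 2 / 2) ^ 2 - 1 / 8⌋ := by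
  rw [Int.le_floor]
  have hq := Real.sq_sqrt (show (0 : ℝ) ≤ q + 1 / 8 by positivity)
  have h2 := Real.sq_sqrt (show (0 : ℝ) ≤ 2 by norm_num)
  have hprod : Real.sqrt 2 * Real.sqrt (q + 1 / 8) ≤ t + 1 / 2 := by
    rw [← Real.sqrt_mul zero_le_two]
    refine Real.sqrt_le_iff.2 ⟨by positivity, ?_⟩
    have : (2 * q : ℝ) ≤ t * (t + 1) := by exact_mod_cast h
    nlinarith
  push_cast
  nlinarith

/-- For all positive integers `p ≥ q`, the covering radius of `G_{p,q}` in
`S_{p+q}` is at most `p + ⌊(√(q + 1/8) − √2/2)² − 1/8⌋`. -/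
theorem stmt_1 (p q : ℕ) (hq : 1 ≤ q) (hpq : q ≤ p) :
    (coveringRadius (Gpq p q : Set (Perm (Fin (p + q)))) : ℤ) ≤
      (p : ℤ) + ⌊(Real.sqrt ((q : ℝ) + 1 / 8) - Real.sqrt 2 / 2) ^ 2 - 1 / 8⌋ := by
  obtain ⟨t, hlt, hle⟩ := exists_mul_pred_lt_le_mul_succ hq
  have hcov := coveringRadius_Gpq_le (p := p) (by omega) hlt
  have hfloor := sub_le_floor_of_two_mul_le hle
  have ht := le_of_mul_pred_lt_two_mul hlt
  have : (coveringRadius (Gpq p q : Set (Perm (Fin (p + q)))) : ℤ) ≤ p + q - t := by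
    have := Nat.cast_le (α := ℤ) |>.2 hcov
    omega
  linarith
end

section
/- For all positive integers p and q with p ≥ q, the covering radius of the (p,q)-type group G_{p,q} in S_{p+q} is at least p. -/
open Equiv

lemma gpq_block {p q : ℕ} (g : Perm (Fin (p + q))) (hg : g ∈ Gpq p q) :
    ∀ i : Fin (p + q), p ≤ (g i).val ↔ p ≤ i.val := by
  induction hg using Subgroup.closure_induction with
  | mem x hx =>
    rcases hx with hx | hx
    · subst hx
      intro i
      set l := (List.finRange p).map (Fin.castLE (Nat.le_add_right p q)) with hl
      have hmem : ∀ x : Fin (p + q), x ∈ l ↔ x.val < p := by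
        intro x
        simp only [hl, List.mem_map, List.mem_finRange]
        constructor
        · rintro ⟨j, -, rfl⟩; exact j.isLt
        · intro h; exact ⟨⟨x.val, h⟩, trivial, by ext; rfl⟩
      by_cases hi : i.val < p
      · have := List.formPerm_apply_mem_of_mem ((hmem i).2 hi)
        rw [hmem] at this
        omega
      · rw [List.formPerm_apply_of_notMem (by rw [hmem]; omega)]
    · subst hx
      intro i
      set l := (List.finRange q).map (Fin.natAdd p) with hl
      have hmem : ∀ x : Fin (p + q), x ∈ l ↔ p ≤ x.val := by
        intro x
        simp only [hl, List.mem_map, List.mem_finRange]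
        constructor
        · rintro ⟨j, -, rfl⟩; simp [Fin.natAdd]
        · intro h
          refine ⟨⟨x.val - p, by omega⟩, trivial, ?_⟩
          ext
          simp [Fin.natAdd]
          omega
      by_cases hi : p ≤ i.val
      · have := List.formPerm_apply_mem_of_mem ((hmem i).2 hi)
        rw [hmem] at this
        omega
      · rw [List.formPerm_apply_of_notMem (by rw [hmem]; omega)]
  | one => simp
  | mul a b _ _ ha hb =>
    intro i
    simp only [Perm.mul_apply]
    rw [ha, hb]
  | inv a _ ha =>
    intro i
    have := ha (a⁻¹ i)
    simpa using this.symm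

/-- For all positive integers `p ≥ q`, the covering radius of `G_{p,q}` in
`S_{p+q}` is at least `p`. -/
theorem stmt_2 (p q : ℕ) (hq : 1 ≤ q) (hpq : q ≤ p) :
    p ≤ coveringRadius (Gpq p q : Set (Perm (Fin (p + q)))) := by
  have hn : 2 ≤ p + q := by omega
  set i0 : Fin (p + q) := ⟨0, by omega⟩ with hi0
  set ilast : Fin (p + q) := ⟨p + q - 1, by omega⟩ with hilast
  set f : Perm (Fin (p + q)) := Equiv.swap i0 ilast with hf
  have hdist : ∀ g ∈ (Gpq p q : Set (Perm (Fin (p + q)))), p ≤ linfDist f g := by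
    intro g hg
    have h1 : f ilast = i0 := Equiv.swap_apply_right _ _
    have h2 : p ≤ (g ilast).val := (gpq_block g hg ilast).2 (by simp [hilast]; omega)
    have : p ≤ (((f ilast).val : ℤ) - ((g ilast).val : ℤ)).natAbs := by
      rw [h1]
      simp only [hi0]
      omega
    calc p ≤ _ := this
      _ ≤ linfDist f g := by
          unfold linfDist
          exact Finset.le_sup (f := fun i : Fin (p + q) =>
            (((f i).val : ℤ) - ((g i).val : ℤ)).natAbs) (Finset.mem_univ ilast)
  have hC : p ≤ distToCode f (Gpq p q : Set (Perm (Fin (p + q)))) := by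
    apply le_csInf
    · exact ⟨linfDist f 1, 1, (Gpq p q).one_mem, rfl⟩
    · rintro b ⟨g, hg, rfl⟩
      exact hdist g hg
  refine le_trans hC (le_csSup ?_ ⟨f, rfl⟩)
  refine ⟨p + q, ?_⟩
  rintro x ⟨h, rfl⟩
  have h1m : (1 : Perm (Fin (p + q))) ∈ (Gpq p q : Set (Perm (Fin (p + q)))) := (Gpq p q).one_mem
  calc distToCode h (Gpq p q : Set (Perm (Fin (p + q))))
      ≤ linfDist h 1 := Nat.sInf_le ⟨1, h1m, rfl⟩
    _ ≤ p + q := by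
        unfold linfDist
        apply Finset.sup_le
        intro i _
        have := (h i).isLt
        have := ((1 : Perm (Fin (p + q))) i).isLt
        omega
end

section
/- Let p ≥ q ≥ 1 be integers, let C = G_{p,q}, and let r be an integer with p ≤ r ≤ p+q. Then for all i,j ∈ [p+q]: if i > p and 1 ≤ j ≤ p+q−r−1 then |A^C_{i→j}| = p+q−r−j; if i ≤ p and r+2 ≤ j ≤ p+q then |A^C_{i→j}| = j−r−1; and in all other cases |A^C_{i→j}| = 0 (i.e., A^C_{i→j} is empty). -/
open Equiv

/-- For `C = G_{p,q}`, `i,j ∈ [p+q]` (0-indexed here), the set `A^C_{i→j}`: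
the set of `g⁻¹(1)` (resp. `g⁻¹(p+1)`) over all `g ∈ C` with `|g(i) - j| > r`,
according to whether `i ∈ [p]` or `i ∈ [p+1,p+q]`. -/
def Aset (p q : ℕ) (hq : 0 < q) (r : ℕ) (i j : Fin (p + q)) : Set (Fin (p + q)) :=
  if (i : ℕ) < p then
    {x | ∃ g ∈ Gpq p q, r < (((g i).val : ℤ) - ((j : ℕ) : ℤ)).natAbs ∧
      x = g⁻¹ ⟨0, i.pos⟩}
  else
    {x | ∃ g ∈ Gpq p q, r < (((g i).val : ℤ) - ((j : ℕ) : ℤ)).natAbs ∧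
      x = g⁻¹ ⟨p, Nat.lt_add_of_pos_right hq⟩}

section Stmt3Aux

variable (p q : ℕ)

private def sigP : Perm (Fin (p + q)) :=
  ((List.finRange p).map (Fin.castLE (Nat.le_add_right p q))).formPerm

private def tauP : Perm (Fin (p + q)) :=
  ((List.finRange q).map (Fin.natAdd p)).formPerm

private lemma Gpq_eq : Gpq p q = Subgroup.closure {sigP p q, tauP p q} := rfl

private lemma mod_inj {n x y : ℕ} (h : x % n = y % n) (hxy : x ≤ y) (hlt : y - x < n) :
    x = y := by
  have h0 : (y - x) % n = 0 := Nat.sub_mod_eq_zero_of_mod_eq h.symm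
  have hd : n ∣ y - x := Nat.dvd_of_mod_eq_zero h0
  rcases Nat.eq_zero_or_pos (y - x) with h' | h'
  · omega
  · exact absurd (Nat.le_of_dvd h' hd) (by omega)

private lemma modzero {q k b w : ℕ} (hq : 0 < q) (hk : k < q) (hw : w = (k + b) % q) :
    ((k + q - w) % q + b) % q = 0 := by
  rw [Nat.mod_add_mod]
  have hd := Nat.div_add_mod (k + b) q
  have hle : w ≤ k + b := hw ▸ Nat.mod_le _ _
  have hwlt : w < q := hw ▸ Nat.mod_lt _ hq
  have h1 : k + q - w + b = q + q * ((k + b) / q) := by omega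
  rw [h1, Nat.add_mul_mod_self_left, Nat.mod_self]

private lemma modsel {q k w : ℕ} (hk : k < q) (hw : w < q) :
    (k + (q + w - k) % q) % q = w := by
  rw [Nat.add_mod_mod]
  have h1 : k + (q + w - k) = q + w := by omega
  rw [h1, Nat.add_mod_left, Nat.mod_eq_of_lt hw]

private lemma sigP_apply (hp : 0 < p) (k : Fin (p + q)) (hk : k.val < p) :
    sigP p q k = ⟨(k.val + 1) % p, by have := Nat.mod_lt (k.val + 1) hp; omega⟩ := by
  have hnd : (((List.finRange p).map (Fin.castLE (Nat.le_add_right p q)))).Nodup :=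
    (List.nodup_finRange p).map (Fin.castLE_injective _)
  have hlen : (((List.finRange p).map (Fin.castLE (Nat.le_add_right p q)))).length = p := by simp
  have h2 := List.formPerm_apply_getElem
    ((List.finRange p).map (Fin.castLE (Nat.le_add_right p q))) hnd k.val (by simpa using hk)
  simp only [List.getElem_map, List.getElem_finRange, List.length_map,
    List.length_finRange] at h2
  rw [sigP]
  convert h2 using 2 <;> simp [Fin.ext_iff]

private lemma sigP_apply_ge (k : Fin (p + q)) (hk : p ≤ k.val) : sigP p q k = k := by
  apply List.formPerm_apply_of_notMem
  simp only [List.mem_map]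
  rintro ⟨a, -, rfl⟩
  exact absurd a.isLt (by simpa [Fin.castLE] using hk.not_gt)

private lemma tauP_apply (hq : 0 < q) (k : Fin (p + q)) (hk : p ≤ k.val) :
    tauP p q k = ⟨p + (k.val - p + 1) % q, by have := Nat.mod_lt (k.val - p + 1) hq; omega⟩ := by
  have hnd : (((List.finRange q).map (Fin.natAdd p))).Nodup :=
    (List.nodup_finRange q).map (fun a b h => by simpa [Fin.ext_iff] using h)
  have hlen : (((List.finRange q).map (Fin.natAdd p))).length = q := by simp
  have hkq : k.val - p < q := by have := k.isLt; omega
  have h2 := List.formPerm_apply_getElem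
    ((List.finRange q).map (Fin.natAdd p)) hnd (k.val - p) (by simpa using hkq)
  simp only [List.getElem_map, List.getElem_finRange, List.length_map,
    List.length_finRange] at h2
  rw [tauP]
  convert h2 using 2 <;> simp [Fin.ext_iff] <;> omega

private lemma tauP_apply_lt (k : Fin (p + q)) (hk : k.val < p) : tauP p q k = k := by
  apply List.formPerm_apply_of_notMem
  simp only [List.mem_map]
  rintro ⟨a, -, rfl⟩
  simp [Fin.natAdd] at hk

private lemma sigP_pow_apply (hp : 0 < p) (a : ℕ) (k : Fin (p + q)) (hk : k.val < p) :
    (sigP p q ^ a) k = ⟨(k.val + a) % p, by have := Nat.mod_lt (k.val + a) hp; omega⟩ := by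
  induction a with
  | zero => simp [Fin.ext_iff, Nat.mod_eq_of_lt hk]
  | succ n ih =>
    rw [pow_succ', Equiv.Perm.mul_apply, ih, sigP_apply p q hp _ (Nat.mod_lt _ hp)]
    simp [Fin.ext_iff, Nat.mod_add_mod, Nat.add_assoc]

private lemma sigP_pow_apply_ge (a : ℕ) (k : Fin (p + q)) (hk : p ≤ k.val) :
    (sigP p q ^ a) k = k := by
  induction a with
  | zero => simp
  | succ n ih => rw [pow_succ', Equiv.Perm.mul_apply, ih, sigP_apply_ge p q k hk]

private lemma tauP_pow_apply (hq : 0 < q) (b : ℕ) (k : Fin (p + q)) (hk : p ≤ k.val) :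
    (tauP p q ^ b) k = ⟨p + (k.val - p + b) % q,
      by have := Nat.mod_lt (k.val - p + b) hq; omega⟩ := by
  induction b with
  | zero =>
    have : k.val - p < q := by have := k.isLt; omega
    simp [Fin.ext_iff, Nat.mod_eq_of_lt this]
    omega
  | succ n ih =>
    rw [pow_succ', Equiv.Perm.mul_apply, ih,
      tauP_apply p q hq _ (by exact Nat.le_add_right _ _)]
    simp only [Fin.ext_iff]
    have h1 : p + (k.val - p + n) % q - p = (k.val - p + n) % q := by omega
    rw [h1, Nat.mod_add_mod]
    simp [Nat.add_assoc]

private lemma tauP_pow_apply_lt (b : ℕ) (k : Fin (p + q)) (hk : k.val < p) :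
    (tauP p q ^ b) k = k := by
  induction b with
  | zero => simp
  | succ n ih => rw [pow_succ', Equiv.Perm.mul_apply, ih, tauP_apply_lt p q k hk]

private lemma sig_tau_comm (hp : 0 < p) (hq : 0 < q) : Commute (sigP p q) (tauP p q) := by
  apply Equiv.ext
  intro x
  rw [Equiv.Perm.mul_apply, Equiv.Perm.mul_apply]
  by_cases hx : x.val < p
  · rw [tauP_apply_lt p q x hx, sigP_apply p q hp x hx,
      tauP_apply_lt p q _ (Nat.mod_lt _ hp)]
  · rw [sigP_apply_ge p q x (by omega), tauP_apply p q hq x (by omega),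
      sigP_apply_ge p q _ (by exact Nat.le_add_right _ _)]

private lemma gel_mem (a b : ℕ) : sigP p q ^ a * tauP p q ^ b ∈ Gpq p q := by
  rw [Gpq_eq]
  exact mul_mem
    (pow_mem (Subgroup.subset_closure (Set.mem_insert _ _)) a)
    (pow_mem (Subgroup.subset_closure (Set.mem_insert_of_mem _ (Set.mem_singleton _))) b)

private lemma inv_eq_pow_sub_one {G : Type*} [Group G] [Finite G] (x : G) :
    x⁻¹ = x ^ (orderOf x - 1) := by
  have h1 : 0 < orderOf x := orderOf_pos x
  have h2 : x * x ^ (orderOf x - 1) = 1 := by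
    rw [← pow_succ', Nat.sub_add_cancel h1, pow_orderOf_eq_one]
  exact inv_eq_of_mul_eq_one_right h2

private lemma mem_gel (hp : 0 < p) (hq : 0 < q) {g : Perm (Fin (p + q))} (hg : g ∈ Gpq p q) :
    ∃ a b : ℕ, g = sigP p q ^ a * tauP p q ^ b := by
  have hc := sig_tau_comm p q hp hq
  rw [Gpq_eq] at hg
  induction hg using Subgroup.closure_induction with
  | mem x hx =>
    simp only [Set.mem_insert_iff, Set.mem_singleton_iff] at hx
    rcases hx with h | h
    · exact ⟨1, 0, by simp [h]⟩
    · exact ⟨0, 1, by simp [h]⟩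
  | one => exact ⟨0, 0, by simp⟩
  | mul x y hx hy ihx ihy =>
    obtain ⟨a, b, rfl⟩ := ihx
    obtain ⟨c, d, rfl⟩ := ihy
    exact ⟨a + c, b + d, by
      rw [pow_add, pow_add]
      exact (hc.symm.pow_pow b c).mul_mul_mul_comm _ _⟩
  | inv x hx ihx =>
    obtain ⟨a, b, rfl⟩ := ihx
    refine ⟨(orderOf (sigP p q) - 1) * a, (orderOf (tauP p q) - 1) * b, ?_⟩
    rw [mul_inv_rev, ← inv_pow, ← inv_pow, inv_eq_pow_sub_one, inv_eq_pow_sub_one,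
      ← pow_mul, ← pow_mul]
    exact ((hc.pow_pow _ _).eq).symm

end Stmt3Aux

section Stmt3Aux2

variable (p q : ℕ)

private lemma gel_apply_lt (hp : 0 < p) (a b : ℕ) (k : Fin (p + q)) (hk : k.val < p) :
    (sigP p q ^ a * tauP p q ^ b) k
      = ⟨(k.val + a) % p, by have := Nat.mod_lt (k.val + a) hp; omega⟩ := by
  rw [Equiv.Perm.mul_apply, tauP_pow_apply_lt p q b k hk, sigP_pow_apply p q hp a k hk]

private lemma gel_apply_ge (hq0 : 0 < q) (a b : ℕ) (k : Fin (p + q)) (hk : p ≤ k.val) :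
    (sigP p q ^ a * tauP p q ^ b) k
      = ⟨p + (k.val - p + b) % q, by have := Nat.mod_lt (k.val - p + b) hq0; omega⟩ := by
  rw [Equiv.Perm.mul_apply, tauP_pow_apply p q hq0 b k hk,
    sigP_pow_apply_ge p q a _ (by exact Nat.le_add_right _ _)]

private lemma gel_val_lt (hp : 0 < p) (a b : ℕ) (k : Fin (p + q)) (hk : k.val < p) :
    ((sigP p q ^ a * tauP p q ^ b) k).val = (k.val + a) % p := by
  rw [gel_apply_lt p q hp a b k hk]

private lemma gel_val_ge (hq0 : 0 < q) (a b : ℕ) (k : Fin (p + q)) (hk : p ≤ k.val) :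
    ((sigP p q ^ a * tauP p q ^ b) k).val = p + (k.val - p + b) % q := by
  rw [gel_apply_ge p q hq0 a b k hk]

private lemma gel_apply_inv_ge (hq0 : 0 < q) (a b k w : ℕ) (hk : k < q)
    (hw : w = (k + b) % q) (h1 : p + (k + q - w) % q < p + q) (h2 : p < p + q) :
    (sigP p q ^ a * tauP p q ^ b) ⟨p + (k + q - w) % q, h1⟩ = ⟨p, h2⟩ := by
  rw [gel_apply_ge p q hq0 a b _ (by exact Nat.le_add_right _ _)]
  apply Fin.ext
  show p + (p + (k + q - w) % q - p + b) % q = p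
  rw [Nat.add_sub_cancel_left, modzero hq0 hk hw]
  omega

private lemma gel_apply_inv_lt (hp : 0 < p) (a b k v : ℕ) (hk : k < p)
    (hv : v = (k + a) % p) (h1 : (k + p - v) % p < p + q) (h2 : 0 < p + q) :
    (sigP p q ^ a * tauP p q ^ b) ⟨(k + p - v) % p, h1⟩ = ⟨0, h2⟩ := by
  rw [gel_apply_lt p q hp a b _ (by exact Nat.mod_lt _ hp)]
  apply Fin.ext
  show ((k + p - v) % p + a) % p = 0
  exact modzero hp hk hv

end Stmt3Aux2

/-- cardinalities of the sets `A^C_{i→j}` for `C = G_{p,q}` and `p ≤ r ≤ p+q`.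
Here `i j : Fin (p+q)` are 0-indexed, corresponding to paper values `i+1, j+1 ∈ [p+q]`:
`i+1 > p` and `j+1 ∈ B = [p+q-r-1]` gives `|A| = p+q-r-(j+1)`;
`i+1 ≤ p` and `j+1 ∈ T = [r+2, p+q]` gives `|A| = (j+1)-r-1`; otherwise `A = ∅`. -/
theorem stmt_3 (p q : ℕ) (hq : 1 ≤ q) (hpq : q ≤ p) (r : ℕ) (hr1 : p ≤ r) (hr2 : r ≤ p + q)
    (i j : Fin (p + q)) :
    (p ≤ (i : ℕ) ∧ (j : ℕ) + r + 2 ≤ p + q →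
      (Aset p q hq r i j).ncard = p + q - r - ((j : ℕ) + 1)) ∧
    ((i : ℕ) < p ∧ r + 1 ≤ (j : ℕ) →
      (Aset p q hq r i j).ncard = (j : ℕ) - r) ∧
    (¬(p ≤ (i : ℕ) ∧ (j : ℕ) + r + 2 ≤ p + q) ∧ ¬((i : ℕ) < p ∧ r + 1 ≤ (j : ℕ)) →
      Aset p q hq r i j = ∅) := by
  have hp : 0 < p := lt_of_lt_of_le hq hpq
  have hq0 : 0 < q := hq
  have hjlt := j.isLt
  have hilt := i.isLt
  refine ⟨?_, ?_, ?_⟩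
  · -- case i ≥ p, small j
    rintro ⟨hip, hjr⟩
    have hi : ¬ ((i : ℕ) < p) := not_lt.2 hip
    have hkq : (i : ℕ) - p < q := by omega
    have key : Aset p q hq r i j
        = ↑((Finset.Ico ((j : ℕ) + r + 1 - p) q).image (fun w =>
            (⟨p + ((i : ℕ) - p + q - w) % q,
              by have := Nat.mod_lt ((i : ℕ) - p + q - w) hq0; omega⟩ : Fin (p + q)))) := by
      simp only [Aset, if_neg hi]
      ext x
      simp only [Set.mem_setOf_eq, Finset.coe_image, Set.mem_image, Finset.mem_coe,
        Finset.mem_Ico]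
      constructor
      · rintro ⟨g, hg, hcond, rfl⟩
        obtain ⟨a, b, rfl⟩ := mem_gel p q hp hq0 hg
        rw [gel_val_ge p q hq0 a b i hip] at hcond
        have hwq : ((i : ℕ) - p + b) % q < q := Nat.mod_lt _ hq0
        refine ⟨((i : ℕ) - p + b) % q, ⟨by omega, hwq⟩, ?_⟩
        rw [Equiv.Perm.eq_inv_iff_eq]
        exact gel_apply_inv_ge p q hq0 a b ((i : ℕ) - p) _ hkq rfl _ _
      · rintro ⟨w, ⟨hw1, hw2⟩, rfl⟩
        refine ⟨sigP p q ^ 0 * tauP p q ^ ((q + w - ((i : ℕ) - p)) % q),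
          gel_mem p q 0 _, ?_, ?_⟩
        · rw [gel_val_ge p q hq0 0 _ i hip, modsel hkq hw2]
          omega
        · rw [Equiv.Perm.eq_inv_iff_eq]
          exact gel_apply_inv_ge p q hq0 0 _ ((i : ℕ) - p) w hkq
            (modsel hkq hw2).symm _ _
    rw [key, Set.ncard_coe_finset, Finset.card_image_of_injOn ?inj, Nat.card_Ico]
    · omega
    case inj =>
      intro w1 hw1 w2 hw2 heq
      simp only [Finset.coe_Ico, Set.mem_Ico] at hw1 hw2
      have h' : p + ((i : ℕ) - p + q - w1) % q = p + ((i : ℕ) - p + q - w2) % q :=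
        congrArg Fin.val heq
      have h'' : ((i : ℕ) - p + q - w1) % q = ((i : ℕ) - p + q - w2) % q := by omega
      rcases le_total w1 w2 with hle | hle
      · have := mod_inj h''.symm (by omega) (by omega); omega
      · have := mod_inj h'' (by omega) (by omega); omega
  · -- case i < p, large j
    rintro ⟨hi, hjr⟩
    have key : Aset p q hq r i j
        = ↑((Finset.range ((j : ℕ) - r)).image (fun v =>
            (⟨((i : ℕ) + p - v) % p,
              by have := Nat.mod_lt ((i : ℕ) + p - v) hp; omega⟩ : Fin (p + q)))) := by
      simp only [Aset, if_pos hi]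
      ext x
      simp only [Set.mem_setOf_eq, Finset.coe_image, Set.mem_image, Finset.mem_coe,
        Finset.mem_range]
      constructor
      · rintro ⟨g, hg, hcond, rfl⟩
        obtain ⟨a, b, rfl⟩ := mem_gel p q hp hq0 hg
        rw [gel_val_lt p q hp a b i hi] at hcond
        have hvp : ((i : ℕ) + a) % p < p := Nat.mod_lt _ hp
        refine ⟨((i : ℕ) + a) % p, by omega, ?_⟩
        rw [Equiv.Perm.eq_inv_iff_eq]
        exact gel_apply_inv_lt p q hp a b (i : ℕ) _ hi rfl _ _
      · rintro ⟨v, hv, rfl⟩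
        have hvp : v < p := by omega
        refine ⟨sigP p q ^ ((p + v - (i : ℕ)) % p) * tauP p q ^ 0,
          gel_mem p q _ 0, ?_, ?_⟩
        · rw [gel_val_lt p q hp _ 0 i hi, modsel hi hvp]
          omega
        · rw [Equiv.Perm.eq_inv_iff_eq]
          exact gel_apply_inv_lt p q hp _ 0 (i : ℕ) v hi (modsel hi hvp).symm _ _
    rw [key, Set.ncard_coe_finset, Finset.card_image_of_injOn ?inj, Finset.card_range]
    case inj =>
      intro v1 hv1 v2 hv2 heq
      simp only [Finset.coe_range, Set.mem_Iio] at hv1 hv2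
      have h'' : ((i : ℕ) + p - v1) % p = ((i : ℕ) + p - v2) % p :=
        congrArg Fin.val heq
      have hb1 : v1 < p := by omega
      have hb2 : v2 < p := by omega
      rcases le_total v1 v2 with hle | hle
      · have := mod_inj h''.symm (by omega) (by omega); omega
      · have := mod_inj h'' (by omega) (by omega); omega
  · -- empty case
    rintro ⟨h1, h2⟩
    ext x
    simp only [Set.mem_empty_iff_false, iff_false]
    by_cases hi : (i : ℕ) < p
    · have hj : ¬ (r + 1 ≤ (j : ℕ)) := fun hc => h2 ⟨hi, hc⟩
      simp only [Aset, if_pos hi, Set.mem_setOf_eq]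
      rintro ⟨g, hg, hcond, -⟩
      obtain ⟨a, b, rfl⟩ := mem_gel p q hp hq0 hg
      rw [gel_val_lt p q hp a b i hi] at hcond
      have := Nat.mod_lt ((i : ℕ) + a) hp
      omega
    · have hip : p ≤ (i : ℕ) := le_of_not_gt hi
      have hj : ¬ ((j : ℕ) + r + 2 ≤ p + q) := fun hc => h1 ⟨hip, hc⟩
      simp only [Aset, if_neg hi, Set.mem_setOf_eq]
      rintro ⟨g, hg, hcond, -⟩
      obtain ⟨a, b, rfl⟩ := mem_gel p q hp hq0 hg
      rw [gel_val_ge p q hq0 a b i hip] at hcond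
      have := Nat.mod_lt ((i : ℕ) - p + b) hq0
      omega
end

section
/- Let p ≥ q ≥ 1 be integers, let C = G_{p,q}, let r be an integer with p ≤ r ≤ p+q, and let f ∈ S_{p+q}. Then d(f,g) > r for every g ∈ C if and only if at least one of the following holds: [p] = ⋃_{i∈[p]} A^C_{i→f(i)}, or [p+1,p+q] = ⋃_{i∈[p+1,p+q]} A^C_{i→f(i)}. -/
/-!
An element of `G_{p,q}` is a pair of independent rotations, one of the block `[p]` and one of
the block `[p+1, p+q]`. So `d(f, g) > r` for all `g ∈ G_{p,q}` iff every rotation of one of the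
two blocks moves some `i` of that block to distance `> r` from `f(i)`: otherwise good rotations
of the two blocks combine to a `g` with `d(f, g) ≤ r`. The rotations of a block act regularly on it,
so such a rotation is determined by the preimage of the block's first point, and the condition
for the block says exactly that every point of the block lies in some `A_{i→f(i)}`.
-/

open Equiv

theorem Subgroup.mem_closure_pair_iff_of_commute {G : Type*} [Group G] [Finite G] {a b x : G}
    (hab : Commute a b) : x ∈ closure {a, b} ↔ ∃ m n : ℕ, a ^ m * b ^ n = x := by
  constructor
  · intro hx
    induction hx using closure_induction with
    | mem x hx =>
      rcases hx with rfl | rfl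
      · exact ⟨1, 0, by simp⟩
      · exact ⟨0, 1, by simp⟩
    | one => exact ⟨0, 0, by simp⟩
    | mul x y _ _ ihx ihy =>
      obtain ⟨m, n, rfl⟩ := ihx
      obtain ⟨m', n', rfl⟩ := ihy
      refine ⟨m + m', n + n', ?_⟩
      rw [pow_add, pow_add]
      exact ((hab.pow_pow m' n).symm.mul_mul_mul_comm _ _).symm
    | inv x _ ihx =>
      obtain ⟨m, n, rfl⟩ := ihx
      have inv_mem_powers (c : G) : ∃ k : ℕ, c ^ k = c⁻¹ :=
        (Submonoid.mem_powers_iff _ _).mp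
          (mem_powers_iff_mem_zpowers.mpr (inv_mem (mem_zpowers c)))
      obtain ⟨k, hk⟩ := inv_mem_powers a
      obtain ⟨l, hl⟩ := inv_mem_powers b
      refine ⟨k * m, l * n, ?_⟩
      rw [pow_mul, pow_mul, hk, hl, mul_inv_rev, inv_pow, inv_pow]
      exact (hab.pow_pow m n).inv_inv.eq
  · rintro ⟨m, n, rfl⟩
    exact mul_mem (pow_mem (subset_closure (by simp)) m) (pow_mem (subset_closure (by simp)) n)

section Blocks

variable {α : Type*} (G : Subgroup (Perm α)) (S T : Set α) (bad : α → α → Prop)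

theorem forall_exists_iff_or_of_splice (hST : ∀ i, i ∈ S ∨ i ∈ T)
    (hsplice : ∀ g ∈ G, ∀ h ∈ G, ∃ k ∈ G, (∀ i ∈ S, k i = g i) ∧ ∀ i ∈ T, k i = h i) :
    (∀ g ∈ G, ∃ i, bad i (g i)) ↔
      (∀ g ∈ G, ∃ i ∈ S, bad i (g i)) ∨ ∀ g ∈ G, ∃ i ∈ T, bad i (g i) := by
  refine ⟨fun H => ?_, ?_⟩
  · by_contra! ⟨⟨g, hg, hgS⟩, ⟨h, hh, hhT⟩⟩
    obtain ⟨k, hk, hkS, hkT⟩ := hsplice g hg h hh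
    obtain ⟨i, hi⟩ := H k hk
    rcases hST i with hiS | hiT
    · exact hgS i hiS (hkS i hiS ▸ hi)
    · exact hhT i hiT (hkT i hiT ▸ hi)
  · rintro (H | H) g hg <;> obtain ⟨i, -, hi⟩ := H g hg <;> exact ⟨i, hi⟩

theorem eq_biUnion_iff_forall_exists {z : α} (hz : z ∈ S)
    (hmaps : ∀ g ∈ G, ∀ x ∈ S, g x ∈ S) (htrans : ∀ x ∈ S, ∃ g ∈ G, g x = z)
    (hfix : ∀ g ∈ G, g z = z → ∀ i ∈ S, g i = i)
    (A : α → Set α) (hA : ∀ i ∈ S, ∀ x, x ∈ A i ↔ ∃ g ∈ G, bad i (g i) ∧ x = g⁻¹ z) :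
    S = ⋃ i ∈ S, A i ↔ ∀ g ∈ G, ∃ i ∈ S, bad i (g i) := by
  constructor
  · intro hcover g hg
    have hgz : g⁻¹ z ∈ ⋃ i ∈ S, A i := hcover ▸ hmaps _ (inv_mem hg) z hz
    obtain ⟨i, hiS, hgz⟩ := Set.mem_iUnion₂.mp hgz
    obtain ⟨h, hh, hbad, hgh⟩ := (hA i hiS _).mp hgz
    -- `h g⁻¹` fixes `z`, hence all of `S`, so `h` and `g` agree on `S`
    have hhg : ∀ j ∈ S, h j = g j := fun j hj => by
      have hz' : (h * g⁻¹) z = z := by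
        simp only [Perm.mul_apply, hgh, Perm.coe_inv, apply_symm_apply]
      have := hfix (h * g⁻¹) (mul_mem hh (inv_mem hg)) hz' (g j) (hmaps g hg j hj)
      simpa only [Perm.mul_apply, Perm.coe_inv, symm_apply_apply] using this
    exact ⟨i, hiS, hhg i hiS ▸ hbad⟩
  · intro H
    ext x
    refine ⟨fun hx => ?_, fun hx => ?_⟩
    · obtain ⟨g, hg, rfl⟩ := htrans x hx
      obtain ⟨i, hiS, hbad⟩ := H g hg
      refine Set.mem_iUnion₂.mpr ⟨i, hiS, (hA i hiS _).mpr ⟨g, hg, hbad, ?_⟩⟩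
      exact (symm_apply_apply g x).symm
    · obtain ⟨i, hiS, hx⟩ := Set.mem_iUnion₂.mp hx
      obtain ⟨g, hg, -, rfl⟩ := (hA i hiS _).mp hx
      exact hmaps _ (inv_mem hg) z hz

end Blocks

theorem Nat.add_mod_eq_self_of_mod_eq_zero {k m d : ℕ} (hk : k < d) (hm : m % d = 0) :
    (k + m) % d = k := by
  rw [Nat.add_mod, hm, add_zero, Nat.mod_mod, Nat.mod_eq_of_lt hk]

theorem lt_linfDist_iff {n : ℕ} (f g : Perm (Fin n)) (r : ℕ) :
    r < linfDist f g ↔ ∃ i, r < (((g i : ℕ) : ℤ) - ((f i : ℕ) : ℤ)).natAbs := by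
  simp only [linfDist, Finset.lt_sup_iff, Finset.mem_univ, true_and]
  refine exists_congr fun i => ?_
  rw [← Int.natAbs_neg, neg_sub]

namespace Gpq

variable (p q : ℕ)

def leftCycle : Perm (Fin (p + q)) :=
  ((List.finRange p).map (Fin.castLE (Nat.le_add_right p q))).formPerm

def rightCycle : Perm (Fin (p + q)) :=
  ((List.finRange q).map (Fin.natAdd p)).formPerm

theorem leftCycle_pow_apply (m : ℕ) (i : Fin (p + q)) :
    ((leftCycle p q ^ m) i : ℕ) = if (i : ℕ) < p then ((i : ℕ) + m) % p else i := by
  set l := (List.finRange p).map (Fin.castLE (Nat.le_add_right p q))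
  have hl : l.Nodup := (List.nodup_finRange p).map (Fin.castLE_injective _)
  split_ifs with hi
  · have hil : (i : ℕ) < l.length := by simpa only [l, List.length_map, List.length_finRange]
    have hli : l[(i : ℕ)] = i := by
      simp only [l, List.getElem_map, List.getElem_finRange, Fin.cast_mk, Fin.castLE_mk, Fin.eta]
    have := congrArg Fin.val (List.formPerm_pow_apply_getElem l hl m i hil)
    simpa [hli, l, leftCycle] using this
  · refine congrArg Fin.val (Perm.pow_apply_eq_self_of_apply_eq_self
      (List.formPerm_apply_of_notMem ?_) m)
    simp only [List.mem_map, List.mem_finRange, Fin.ext_iff, Fin.val_castLE, true_and,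
      not_exists]
    omega

theorem rightCycle_pow_apply (n : ℕ) (i : Fin (p + q)) :
    ((rightCycle p q ^ n) i : ℕ) = if p ≤ (i : ℕ) then p + ((i : ℕ) - p + n) % q else i := by
  set l := (List.finRange q).map (Fin.natAdd p)
  have hl : l.Nodup := (List.nodup_finRange q).map (Fin.natAdd_injective _ _)
  split_ifs with hi
  · have hil : (i : ℕ) - p < l.length := by
      simp only [l, List.length_map, List.length_finRange]
      omega
    have hli : l[(i : ℕ) - p] = i := by
      simp only [l, List.getElem_map, List.getElem_finRange, Fin.cast_mk, Fin.natAdd_mk]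
      ext
      simp only
      omega
    have := congrArg Fin.val (List.formPerm_pow_apply_getElem l hl n (i - p) hil)
    simpa [hli, l, rightCycle] using this
  · refine congrArg Fin.val (Perm.pow_apply_eq_self_of_apply_eq_self
      (List.formPerm_apply_of_notMem ?_) n)
    simp only [List.mem_map, List.mem_finRange, Fin.ext_iff, Fin.val_natAdd, true_and,
      not_exists]
    omega

def blockShift (m n k : ℕ) : ℕ :=
  if k < p then (k + m) % p else p + (k - p + n) % q

theorem leftCycle_pow_mul_rightCycle_pow_apply (m n : ℕ) (i : Fin (p + q)) :
    ((leftCycle p q ^ m * rightCycle p q ^ n) i : ℕ) = blockShift p q m n i := by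
  rw [Perm.mul_apply, blockShift]
  split_ifs with hi
  · have : (rightCycle p q ^ n) i = i := Fin.ext (by rw [rightCycle_pow_apply, if_neg (by omega)])
    rw [this, leftCycle_pow_apply, if_pos hi]
  · rw [leftCycle_pow_apply, rightCycle_pow_apply, if_pos (show p ≤ (i : ℕ) by omega),
      if_neg (by omega)]

theorem commute_leftCycle_rightCycle : Commute (leftCycle p q) (rightCycle p q) := by
  refine Perm.Disjoint.commute fun i => ?_
  have hl := leftCycle_pow_apply p q 1 i
  have hr := rightCycle_pow_apply p q 1 i
  rw [pow_one] at hl hr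
  by_cases hi : (i : ℕ) < p
  · exact Or.inr (Fin.ext (by rw [hr, if_neg (by omega)]))
  · exact Or.inl (Fin.ext (by rw [hl, if_neg hi]))

theorem mem_Gpq_iff {g : Perm (Fin (p + q))} :
    g ∈ Gpq p q ↔ ∃ m n : ℕ, ∀ i, (g i : ℕ) = blockShift p q m n i := by
  change g ∈ Subgroup.closure {leftCycle p q, rightCycle p q} ↔ _
  rw [Subgroup.mem_closure_pair_iff_of_commute (commute_leftCycle_rightCycle p q)]
  refine exists₂_congr fun m n => ?_
  simp only [Perm.ext_iff, Fin.ext_iff, leftCycle_pow_mul_rightCycle_pow_apply, eq_comm]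

theorem exists_mem_Gpq_blockShift (m n : ℕ) :
    ∃ g ∈ Gpq p q, ∀ i, (g i : ℕ) = blockShift p q m n i :=
  ⟨_, (mem_Gpq_iff p q).mpr ⟨m, n, leftCycle_pow_mul_rightCycle_pow_apply p q m n⟩,
    leftCycle_pow_mul_rightCycle_pow_apply p q m n⟩

variable {p q}

theorem exists_splice {g h : Perm (Fin (p + q))} (hg : g ∈ Gpq p q) (hh : h ∈ Gpq p q) :
    ∃ k ∈ Gpq p q, (∀ i : Fin (p + q), (i : ℕ) < p → k i = g i) ∧
      ∀ i : Fin (p + q), p ≤ (i : ℕ) → k i = h i := by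
  obtain ⟨m, n, hg⟩ := (mem_Gpq_iff p q).mp hg
  obtain ⟨m', n', hh⟩ := (mem_Gpq_iff p q).mp hh
  obtain ⟨k, hk, hkv⟩ := exists_mem_Gpq_blockShift p q m n'
  refine ⟨k, hk, fun i hi => Fin.ext ?_, fun i hi => Fin.ext ?_⟩
  · rw [hkv, hg, blockShift, blockShift, if_pos hi, if_pos hi]
  · rw [hkv, hh, blockShift, blockShift, if_neg (by omega), if_neg (by omega)]

theorem apply_lt_of_lt {g : Perm (Fin (p + q))} (hg : g ∈ Gpq p q) {i : Fin (p + q)}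
    (hi : (i : ℕ) < p) : (g i : ℕ) < p := by
  obtain ⟨m, n, hg⟩ := (mem_Gpq_iff p q).mp hg
  rw [hg, blockShift, if_pos hi]
  exact Nat.mod_lt _ (by omega)

theorem le_apply_of_le {g : Perm (Fin (p + q))} (hg : g ∈ Gpq p q) {i : Fin (p + q)}
    (hi : p ≤ (i : ℕ)) : p ≤ (g i : ℕ) := by
  obtain ⟨m, n, hg⟩ := (mem_Gpq_iff p q).mp hg
  rw [hg, blockShift, if_neg (by omega)]
  omega

theorem exists_apply_eq_of_lt {i z : Fin (p + q)} (hi : (i : ℕ) < p) (hz : (z : ℕ) = 0) :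
    ∃ g ∈ Gpq p q, g i = z := by
  obtain ⟨g, hg, hgv⟩ := exists_mem_Gpq_blockShift p q (p - i) 0
  refine ⟨g, hg, Fin.ext ?_⟩
  rw [hz, hgv, blockShift, if_pos hi, Nat.add_sub_cancel' hi.le, Nat.mod_self]

theorem exists_apply_eq_of_le {i z : Fin (p + q)} (hi : p ≤ (i : ℕ)) (hz : (z : ℕ) = p) :
    ∃ g ∈ Gpq p q, g i = z := by
  obtain ⟨g, hg, hgv⟩ := exists_mem_Gpq_blockShift p q 0 (q - (i - p))
  refine ⟨g, hg, Fin.ext ?_⟩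
  rw [hz, hgv, blockShift, if_neg (by omega), Nat.add_sub_cancel' (by omega), Nat.mod_self,
    add_zero]

theorem apply_eq_self_of_lt {g : Perm (Fin (p + q))} (hg : g ∈ Gpq p q)
    {z : Fin (p + q)} (hz : (z : ℕ) = 0) (hgz : g z = z) {i : Fin (p + q)} (hi : (i : ℕ) < p) :
    g i = i := by
  obtain ⟨m, n, hg⟩ := (mem_Gpq_iff p q).mp hg
  have hm : m % p = 0 := by
    have := hg z
    rwa [hgz, blockShift, if_pos (by omega), hz, zero_add, eq_comm] at this
  exact Fin.ext (by rw [hg, blockShift, if_pos hi, Nat.add_mod_eq_self_of_mod_eq_zero hi hm])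

theorem apply_eq_self_of_le {g : Perm (Fin (p + q))} (hg : g ∈ Gpq p q)
    {z : Fin (p + q)} (hz : (z : ℕ) = p) (hgz : g z = z) {i : Fin (p + q)} (hi : p ≤ (i : ℕ)) :
    g i = i := by
  obtain ⟨m, n, hg⟩ := (mem_Gpq_iff p q).mp hg
  have hn : n % q = 0 := by
    have := hg z
    rw [hgz, blockShift, if_neg (by omega), hz, Nat.sub_self, zero_add] at this
    omega
  exact Fin.ext (by
    rw [hg, blockShift, if_neg (by omega),
      Nat.add_mod_eq_self_of_mod_eq_zero (by omega) hn]
    omega)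

theorem mem_Aset_of_lt (hq : 0 < q) (r : ℕ) {i : Fin (p + q)} (hi : (i : ℕ) < p)
    (j x : Fin (p + q)) :
    x ∈ Aset p q hq r i j ↔ ∃ g ∈ Gpq p q,
      r < (((g i : ℕ) : ℤ) - ((j : ℕ) : ℤ)).natAbs ∧ x = g⁻¹ ⟨0, by omega⟩ := by
  rw [Aset, if_pos hi]
  rfl

theorem mem_Aset_of_le (hq : 0 < q) (r : ℕ) {i : Fin (p + q)} (hi : p ≤ (i : ℕ))
    (j x : Fin (p + q)) :
    x ∈ Aset p q hq r i j ↔ ∃ g ∈ Gpq p q,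
      r < (((g i : ℕ) : ℤ) - ((j : ℕ) : ℤ)).natAbs ∧ x = g⁻¹ ⟨p, by omega⟩ := by
  rw [Aset, if_neg (by omega)]
  rfl

end Gpq

theorem stmt_4_general (p q : ℕ) (hq : 1 ≤ q) (hpq : q ≤ p) (r : ℕ)
    (f : Perm (Fin (p + q))) :
    (∀ g ∈ Gpq p q, r < linfDist f g) ↔
      ({x : Fin (p + q) | (x : ℕ) < p} =
        ⋃ i ∈ {i : Fin (p + q) | (i : ℕ) < p}, Aset p q hq r i (f i)) ∨
      ({x : Fin (p + q) | p ≤ (x : ℕ)} =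
        ⋃ i ∈ {i : Fin (p + q) | p ≤ (i : ℕ)}, Aset p q hq r i (f i)) := by
  have hp : 0 < p := by omega
  set far : Fin (p + q) → Fin (p + q) → Prop :=
    fun i y => r < (((y : ℕ) : ℤ) - ((f i : ℕ) : ℤ)).natAbs
  simp_rw [lt_linfDist_iff]
  rw [eq_biUnion_iff_forall_exists (Gpq p q) {x | x < p} far (z := ⟨0, by omega⟩) hp
      (fun g hg x hx => Gpq.apply_lt_of_lt hg hx) (fun x hx => Gpq.exists_apply_eq_of_lt hx rfl)
      (fun g hg hgz i hi => Gpq.apply_eq_self_of_lt hg rfl hgz hi) _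
      fun i hi x => Gpq.mem_Aset_of_lt hq r hi _ x,
    eq_biUnion_iff_forall_exists (Gpq p q) {x | p ≤ x} far (z := ⟨p, by omega⟩) (le_refl p)
      (fun g hg x hx => Gpq.le_apply_of_le hg hx) (fun x hx => Gpq.exists_apply_eq_of_le hx rfl)
      (fun g hg hgz i hi => Gpq.apply_eq_self_of_le hg rfl hgz hi) _
      fun i hi x => Gpq.mem_Aset_of_le hq r hi _ x]
  exact forall_exists_iff_or_of_splice (Gpq p q) {x | x < p} {x | p ≤ x} far
    (fun i => lt_or_ge (i : ℕ) p) fun g hg h hh => Gpq.exists_splice hg hh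

/-- `f` is `r`-exposed by `C = G_{p,q}` (i.e. `d(f,g) > r` for every `g ∈ C`)
iff `[p] = ⋃_{i∈[p]} A^C_{i→f(i)}` or `[p+1,p+q] = ⋃_{i∈[p+1,p+q]} A^C_{i→f(i)}`
(0-indexed: `[p]` is `{x | x < p}` and `[p+1,p+q]` is `{x | p ≤ x}`). -/
theorem stmt_4 (p q : ℕ) (hq : 1 ≤ q) (hpq : q ≤ p) (r : ℕ) (hr1 : p ≤ r) (hr2 : r ≤ p + q)
    (f : Perm (Fin (p + q))) :
    (∀ g ∈ Gpq p q, r < linfDist f g) ↔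
      ({x : Fin (p + q) | (x : ℕ) < p} =
        ⋃ i ∈ {i : Fin (p + q) | (i : ℕ) < p}, Aset p q hq r i (f i)) ∨
      ({x : Fin (p + q) | p ≤ (x : ℕ)} =
        ⋃ i ∈ {i : Fin (p + q) | p ≤ (i : ℕ)}, Aset p q hq r i (f i)) :=
  stmt_4_general p q hq hpq r f
end

section
/- For all positive integers p and q with p ≥ q, the maximum covering radius over all relabelings of the (p,q)-type group satisfies L_max(G_{p,q}) ≤ p + ⌊(√(q + 1/4) − 1/2)²⌋. -/
open Equiv

/-!
Conjugating `G_{p,q}` by `π` gives the group generated by two disjoint cycles `σ₁, σ₂` of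
lengths `p` and `q` that together cover `[n]`, `n = p + q`; it contains every `σ₁ ^ s * σ₂ ^ t`.
Fix a target `f` and a threshold `M`. For a cycle of length `ℓ`, if every shift `s` moved some
point `l[k]` of the cycle to `l[k + s]` at distance more than `M` from `f l[k]`, then
`s ↦ (f l[k], l[k + s])` would inject the `ℓ` shifts into the set of pairs `(v, w)` with
`|v - w| > M`. When `n = M + 1 + R` there are only `R (R + 1)` such pairs, so if `R (R + 1) < q ≤ p`
both cycles have a good shift, and the product of the two good powers is `M`-close to `f`.
Taking `R` maximal with `R (R + 1) < q` gives
`M = p + q - 1 - R ≤ p + ⌊(√(q + 1/4) - 1/2)²⌋`.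
-/

namespace List

variable {α : Type*} [DecidableEq α]

theorem finRange_add_eq_append (p q : ℕ) :
    finRange (p + q) =
      (finRange p).map (Fin.castLE (Nat.le_add_right p q)) ++ (finRange q).map (Fin.natAdd p) := by
  rw [← ofFn_id, ofFn_add, ofFn_eq_map, ofFn_eq_map]
  rfl

theorem formPerm_map_perm (π : Equiv.Perm α) :
    ∀ l : List α, (l.map π).formPerm = π * l.formPerm * π⁻¹
  | [] => by simp
  | [_] => by simp
  | x :: y :: l => by
    rw [map_cons, map_cons, formPerm_cons_cons, ← map_cons, formPerm_map_perm π (y :: l),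
      formPerm_cons_cons, Equiv.swap_apply_apply]
    group

theorem formPerm_pow_apply_mem {l : List α} {x : α} (h : x ∈ l) (t : ℕ) :
    (l.formPerm ^ t) x ∈ l := by
  induction t with
  | zero => simpa
  | succ t ih =>
    rw [pow_succ', Equiv.Perm.mul_apply]
    exact formPerm_apply_mem_of_mem ih

theorem exists_forall_not_rel_formPerm_pow {β : Type*} [Fintype α] [Fintype β] {l : List α}
    (hl : l.Nodup) {f : α → β} (hf : Function.Injective f) (r : β → α → Prop) [DecidableRel r]
    (h : (Finset.univ.filter fun x : β × α => r x.1 x.2).card < l.length) :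
    ∃ s : ℕ, ∀ i ∈ l, ¬ r (f i) ((l.formPerm ^ s) i) := by
  suffices hgood : ∃ s : Fin l.length, ∀ k : Fin l.length, ¬ r (f l[k]) l[k + s] by
    obtain ⟨s, hs⟩ := hgood
    refine ⟨s, fun i hi => ?_⟩
    obtain ⟨k, hk, rfl⟩ := getElem_of_mem hi
    rw [formPerm_pow_apply_getElem l hl s k hk]
    simpa [Fin.val_add] using hs ⟨k, hk⟩
  by_contra! hbad
  choose k hk using hbad
  have hinj : Set.InjOn (fun s => (f l[k s], l[k s + s]))
      ↑(Finset.univ : Finset (Fin l.length)) := by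
    intro s _ s' _ hss
    obtain ⟨h₁, h₂⟩ := Prod.ext_iff.1 hss
    have hks : k s = k s' := Fin.ext ((hl.getElem_inj_iff).1 (hf h₁))
    have := Fin.ext ((hl.getElem_inj_iff).1 h₂)
    rw [hks] at this
    exact add_left_cancel this
  have := Finset.card_le_card_of_injOn (t := Finset.univ.filter fun x : β × α => r x.1 x.2) _
    (fun s _ => by simpa using hk s) hinj
  simp only [Finset.card_univ, Fintype.card_fin] at this
  omega

end List

def farPairs (n M : ℕ) : Finset (Fin n × Fin n) :=
  Finset.univ.filter fun x => M < ((x.1.val : ℤ) - (x.2.val : ℤ)).natAbs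

theorem card_farPairs_le {n M R : ℕ} (h : n ≤ M + 1 + R) : (farPairs n M).card ≤ R * (R + 1) := by
  -- `(v, w)` with `v < w` goes to `(v, w - M)`, with `v < w - M ≤ R`;
  -- `(v, w)` with `w < v` goes to `(v - M - 1, w)`, with `w ≤ v - M - 1 < R`.
  let g : Fin n × Fin n → ℕ × ℕ := fun x =>
    if x.1 < x.2 then (x.1.val, x.2.val - M) else (x.1.val - (M + 1), x.2.val)
  calc (farPairs n M).card ≤ (Finset.range R ×ˢ Finset.range (R + 1)).card := by
        refine Finset.card_le_card_of_injOn g (fun x hx => ?_) (fun x hx y hy hxy => ?_)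
        · simp only [farPairs, Finset.coe_filter, Finset.mem_univ, true_and,
            Set.mem_ofPred_eq] at hx
          have := x.2.isLt
          simp only [g, Fin.lt_def]
          split_ifs <;>
            simp only [Finset.coe_product, Finset.coe_range, Set.mem_prod, Set.mem_Iio] <;> omega
        · simp only [farPairs, Finset.coe_filter, Finset.mem_univ, true_and,
            Set.mem_ofPred_eq] at hx hy
          simp only [g, Fin.lt_def] at hxy
          split_ifs at hxy <;> simp only [Prod.mk.injEq] at hxy <;>
            exact Prod.ext (Fin.ext (by omega)) (Fin.ext (by omega))
    _ = R * (R + 1) := by simp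

theorem coveringRadius_le {n M : ℕ} {C : Set (Perm (Fin n))}
    (h : ∀ f, ∃ g ∈ C, linfDist f g ≤ M) : coveringRadius C ≤ M :=
  csSup_le (Set.range_nonempty _) <| Set.forall_mem_range.2 fun f =>
    let ⟨_, hg, hfg⟩ := h f
    (Nat.sInf_le (Set.mem_image_of_mem _ hg)).trans hfg

theorem Lmax_le {n M : ℕ} {C : Set (Perm (Fin n))}
    (h : ∀ π, coveringRadius (conjCode π C) ≤ M) : Lmax C ≤ M :=
  csSup_le (Set.range_nonempty _) (Set.forall_mem_range.2 h)

theorem exists_linfDist_formPerm_pow_mul_formPerm_pow_le {n M : ℕ} (f : Perm (Fin n))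
    {l₁ l₂ : List (Fin n)} (hnd : (l₁ ++ l₂).Nodup) (hcover : ∀ i, i ∈ l₁ ++ l₂)
    (h₁ : (farPairs n M).card < l₁.length) (h₂ : (farPairs n M).card < l₂.length) :
    ∃ s t : ℕ, linfDist f (l₁.formPerm ^ s * l₂.formPerm ^ t) ≤ M := by
  obtain ⟨hnd₁, hnd₂, hdisj⟩ := List.nodup_append.1 hnd
  let far : Fin n → Fin n → Prop := fun v w => M < ((v.val : ℤ) - (w.val : ℤ)).natAbs
  obtain ⟨s, hs⟩ := List.exists_forall_not_rel_formPerm_pow hnd₁ f.injective far h₁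
  obtain ⟨t, ht⟩ := List.exists_forall_not_rel_formPerm_pow hnd₂ f.injective far h₂
  refine ⟨s, t, Finset.sup_le fun i _ => ?_⟩
  rcases List.mem_append.1 (hcover i) with hi | hi
  · have hfix : (l₂.formPerm ^ t) i = i := Perm.pow_apply_eq_self_of_apply_eq_self
      (List.formPerm_apply_of_notMem fun hi₂ => hdisj i hi i hi₂ rfl) t
    simpa [far, hfix] using hs i hi
  · have hfix : (l₁.formPerm ^ s) ((l₂.formPerm ^ t) i) = (l₂.formPerm ^ t) i :=
      Perm.pow_apply_eq_self_of_apply_eq_self (List.formPerm_apply_of_notMem fun hi₁ =>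
        hdisj _ hi₁ _ (List.formPerm_pow_apply_mem hi t) rfl) s
    simpa [far, hfix] using ht i hi

theorem Lmax_Gpq_le {p q M : ℕ} (hp : (farPairs (p + q) M).card < p)
    (hq : (farPairs (p + q) M).card < q) : Lmax (Gpq p q : Set (Perm (Fin (p + q)))) ≤ M := by
  set l₁ := (List.finRange p).map (Fin.castLE (Nat.le_add_right p q))
  set l₂ := (List.finRange q).map (Fin.natAdd p)
  refine Lmax_le fun π => coveringRadius_le fun f => ?_
  have hsplit : l₁.map π ++ l₂.map π = (List.finRange (p + q)).map π := by
    rw [← List.map_append, List.finRange_add_eq_append]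
  obtain ⟨s, t, hst⟩ := exists_linfDist_formPerm_pow_mul_formPerm_pow_le f
    (hsplit ▸ (List.nodup_finRange _).map π.injective)
    (fun i => hsplit ▸ List.mem_map.2 ⟨π⁻¹ i, List.mem_finRange _, π.apply_symm_apply i⟩)
    (by simpa [l₁] using hp) (by simpa [l₂] using hq)
  have hgen₁ : l₁.formPerm ∈ Gpq p q := Subgroup.subset_closure (Set.mem_insert _ _)
  have hgen₂ : l₂.formPerm ∈ Gpq p q := Subgroup.subset_closure (Set.mem_insert_of_mem _ rfl)
  refine ⟨_, ⟨l₁.formPerm ^ s * l₂.formPerm ^ t, mul_mem (pow_mem hgen₁ s) (pow_mem hgen₂ t), ?_⟩,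
    hst⟩
  simp only [List.formPerm_map_perm, conj_pow]
  group

theorem exists_mul_succ_lt_le_succ_mul_succ {q : ℕ} (hq : 1 ≤ q) :
    ∃ R : ℕ, R * (R + 1) < q ∧ q ≤ (R + 1) * (R + 2) := by
  induction q, hq using Nat.le_induction with
  | base => exact ⟨0, by norm_num, by norm_num⟩
  | succ q _ ih =>
    obtain ⟨R, hlt, hle⟩ := ih
    rcases hle.lt_or_eq with hlt' | heq
    · exact ⟨R, by omega, hlt'⟩
    · exact ⟨R + 1, by rw [heq]; nlinarith, by rw [heq]; nlinarith⟩

theorem sub_le_floor_sq_sqrt_add_sub_half {q R : ℕ} (h : q ≤ (R + 1) * (R + 2)) :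
    (q : ℤ) - 1 - R ≤ ⌊(√((q : ℝ) + 1 / 4) - 1 / 2) ^ 2⌋ := by
  rw [Int.le_floor]
  push_cast
  have hq : (q : ℝ) ≤ (R + 1) * (R + 2) := by exact_mod_cast h
  have hsq := Real.sq_sqrt (show (0 : ℝ) ≤ q + 1 / 4 by positivity)
  have hle : √((q : ℝ) + 1 / 4) ≤ R + 3 / 2 :=
    Real.sqrt_le_iff.2 ⟨by positivity, by nlinarith⟩
  nlinarith

/-- For all positive integers `p ≥ q`,
`L_max(G_{p,q}) ≤ p + ⌊(√(q + 1/4) − 1/2)²⌋`. -/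
theorem stmt_5 (p q : ℕ) (hq : 1 ≤ q) (hpq : q ≤ p) :
    (Lmax (Gpq p q : Set (Perm (Fin (p + q)))) : ℤ) ≤
      (p : ℤ) + ⌊(Real.sqrt ((q : ℝ) + 1 / 4) - 1 / 2) ^ 2⌋ := by
  obtain ⟨R, hR, hqR⟩ := exists_mul_succ_lt_le_succ_mul_succ hq
  have hRq : R < q := by nlinarith
  have hcard : (farPairs (p + q) (p + (q - 1 - R))).card < q :=
    (card_farPairs_le (by omega)).trans_lt hR
  have hLmax := Lmax_Gpq_le (hcard.trans_le hpq) hcard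
  have hfloor := sub_le_floor_sq_sqrt_add_sub_half hqR
  omega
end

section
/- For all positive integers p and q with p ≥ q, the minimum covering radius over all relabelings of the (p,q)-type group satisfies L_min(G_{p,q}) ≥ p − ⌈√(2p·ln(p) + 2p)⌉. -/
/-!
On the first block, every element of `G_{p,q}` acts as a rotation `z ↦ z + i` of `ℤ/p`, so a
relabelled codeword `π g π⁻¹` sends the position `π z` to `π (z + i)`. Given `π`, let
`u_0, …, u_{s-1}` be block points with `π u_t ≥ p - 1 - t` (the `s` largest values of `π` on
the block). A union bound over the `p` rotations shows that, once `p ∏_{k=1}^s (p - k) < p^s`,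
some `m_0, …, m_{s-1}` satisfy: every rotation sends some `m_v` to some `u_t` with `t + v < s`.
A permutation `f` with `f (π m_v) ≤ v` then differs from every codeword by at least
`p - 1 - t - v ≥ p - s` at the position `π m_v`. For `s = ⌈√(2p ln p + 2p)⌉` the counting
condition holds because `∏_{k=1}^s (1 - k/p) ≤ exp (-s(s+1)/2p) ≤ 1/(e p)`.
-/

open Equiv

open Finset Function

section Covering

variable {G : Type*} [AddGroup G] [Fintype G] [DecidableEq G]

theorem exists_shift_cover {s : ℕ} (u : Fin s → G) (hu : Injective u)
    (hcount : Fintype.card G * ∏ k ∈ range s, (Fintype.card G - (k + 1)) < Fintype.card G ^ s) :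
    ∃ m : Fin s → G, ∀ i : G, ∃ v t : Fin s, t.val + v.val < s ∧ m v + i = u t := by
  let forbidden (i : G) (v : Fin s) : Finset G :=
    ({t : Fin s | t.val < s - v.val} : Finset (Fin s)).image fun t => u t - i
  let bad (i : G) : Finset (Fin s → G) := Fintype.piFinset fun v => (forbidden i v)ᶜ
  have card_bad (i : G) : #(bad i) = ∏ k ∈ range s, (Fintype.card G - (k + 1)) := by
    have card_forbidden (v : Fin s) : #(forbidden i v) = s - v := by
      have hinj : Injective fun t => u t - i := sub_left_injective.comp hu
      rw [card_image_of_injective _ hinj, Fin.card_filter_val_lt]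
      omega
    simp only [bad, Fintype.card_piFinset, card_compl, card_forbidden]
    rw [Fin.prod_univ_eq_prod_range (fun v => Fintype.card G - (s - v)), ← prod_range_reflect]
    refine prod_congr rfl fun k hk => ?_
    have := mem_range.mp hk
    congr 1
    omega
  obtain ⟨m, -, hm⟩ : ∃ m ∈ (univ : Finset (Fin s → G)), m ∉ univ.biUnion bad := by
    refine exists_mem_notMem_of_card_lt_card (card_biUnion_le.trans_lt ?_)
    simpa [card_bad] using hcount
  refine ⟨m, fun i => ?_⟩
  simp only [bad, forbidden, mem_biUnion, mem_univ, true_and, Fintype.mem_piFinset, mem_compl,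
    not_exists, not_forall, not_not, mem_image, mem_filter] at hm
  obtain ⟨v, t, ht, hmv⟩ := hm i
  exact ⟨v, t, by omega, by rw [← hmv, sub_add_cancel]⟩

end Covering

section Estimates

open Real

theorem sum_range_cast_add_one (s : ℕ) :
    ∑ k ∈ range s, ((k : ℝ) + 1) = s * (s + 1) / 2 := by
  induction s with
  | zero => simp
  | succ n ih => rw [sum_range_succ, ih]; push_cast; ring

theorem prod_range_sub_le_pow_mul_exp {p s : ℕ} (hs : s ≤ p) :
    ∏ k ∈ range s, ((p : ℝ) - (k + 1)) ≤ p ^ s * exp (-(s * (s + 1) / (2 * p))) := by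
  rcases Nat.eq_zero_or_pos p with rfl | hp
  · simp [Nat.le_zero.mp hs]
  have hp : (0 : ℝ) < p := by exact_mod_cast hp
  calc ∏ k ∈ range s, ((p : ℝ) - (k + 1))
      ≤ ∏ k ∈ range s, ((p : ℝ) * exp (-((k + 1) / p))) := by
        refine prod_le_prod (fun k hk => ?_) (fun k _ => ?_)
        · have hk : (k : ℝ) + 1 ≤ p := by exact_mod_cast (mem_range.mp hk : k < s).trans_le hs
          linarith
        · have hexp := add_one_le_exp (-((k + 1) / p : ℝ))
          have hfactor : (p : ℝ) - (k + 1) = p * (-((k + 1) / p) + 1) := by field_simp; ring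
          rw [hfactor]
          gcongr
    _ = (p : ℝ) ^ s * exp (-(s * (s + 1) / (2 * p))) := by
        rw [prod_mul_distrib, prod_const, card_range, ← exp_sum, sum_neg_distrib, ← sum_div,
          sum_range_cast_add_one]
        ring_nf

theorem mul_prod_range_sub_lt_pow {p s : ℕ} (hs : s < p)
    (hsq : 2 * p * log p + 2 * p ≤ (s : ℝ) ^ 2) :
    p * ∏ k ∈ range s, (p - (k + 1)) < p ^ s := by
  have hp : (0 : ℝ) < p := Nat.cast_pos.mpr (by omega)
  have hcast : ((∏ k ∈ range s, (p - (k + 1)) : ℕ) : ℝ) =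
      ∏ k ∈ range s, ((p : ℝ) - (k + 1)) := by
    push_cast [Nat.cast_prod]
    refine prod_congr rfl fun k hk => ?_
    rw [Nat.cast_sub (by have := mem_range.mp hk; omega)]
    push_cast; ring
  suffices (p : ℝ) * ∏ k ∈ range s, ((p : ℝ) - (k + 1)) < (p : ℝ) ^ s by
    rw [← hcast] at this; exact_mod_cast this
  have hexponent : log p + 1 ≤ s * (s + 1) / (2 * p) := by
    rw [le_div_iff₀ (by positivity)]
    nlinarith
  calc (p : ℝ) * ∏ k ∈ range s, ((p : ℝ) - (k + 1))
      ≤ p * (p ^ s * exp (-(s * (s + 1) / (2 * p)))) := by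
        gcongr; exact prod_range_sub_le_pow_mul_exp hs.le
    _ ≤ p * (p ^ s * exp (-(log p + 1))) := by gcongr
    _ = p ^ s * exp (-1) := by
        rw [neg_add, exp_add, exp_neg (log p), exp_log hp]; field_simp
    _ < p ^ s := mul_lt_of_lt_one_right (by positivity) (exp_lt_one_iff.mpr (by norm_num))

end Estimates

theorem Fin.val_le_of_strictMono {n : ℕ} {g : Fin n → ℕ} (hg : StrictMono g) (k : Fin n) :
    k.val ≤ g k := by
  obtain ⟨k, hk⟩ := k
  induction k with
  | zero => exact Nat.zero_le _
  | succ j ih => exact (ih (by omega)).trans_lt (hg (Fin.mk_lt_mk.mpr j.lt_succ_self))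

theorem exists_injective_card_sub_one_sub_le {α : Type*} [Fintype α] {F : α → ℕ}
    (hF : Injective F) {s : ℕ} (hs : s ≤ Fintype.card α) :
    ∃ u : Fin s → α, Injective u ∧ ∀ t, Fintype.card α - 1 - t ≤ F (u t) := by
  classical
  set n := Fintype.card α
  have hcard : #(univ.image F) = n := card_image_of_injective _ hF
  set g := (univ.image F).orderEmbOfFin hcard
  have hmem (k : Fin n) : ∃ y, F y = g k := by
    obtain ⟨y, -, hy⟩ := mem_image.mp ((univ.image F).orderEmbOfFin_mem hcard k)
    exact ⟨y, hy⟩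
  choose y hy using hmem
  let rank (t : Fin s) : Fin n := ⟨n - 1 - t, by omega⟩
  refine ⟨y ∘ rank, fun t t' h => ?_, fun t => ?_⟩
  · have := g.injective ((hy _).symm.trans ((congrArg F h).trans (hy _)))
    simp only [rank, Fin.mk.injEq] at this
    omega
  · simpa only [comp_apply, hy] using Fin.val_le_of_strictMono g.strictMono (rank t)

theorem Fin.exists_perm_apply_le_castLE {s N : ℕ} (hs : s ≤ N) (φ : Fin s → Fin N) :
    ∃ f : Perm (Fin N), ∀ v, f (φ v) ≤ Fin.castLE hs v := by
  classical
  let first (x : Set.range φ) : Fin s := (univ.filter (φ · = x)).min' (by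
    obtain ⟨v, hv⟩ := x.2; exact ⟨v, by simpa using hv⟩)
  have hfirst (x : Set.range φ) : φ (first x) = x :=
    (mem_filter.mp (min'_mem (univ.filter (φ · = x)) _)).2
  have hfirst_le (v : Fin s) : first ⟨φ v, v, rfl⟩ ≤ v := min'_le _ _ (by simp)
  have hinj : Injective (Fin.castLE hs ∘ first) := fun x x' h =>
    Subtype.ext <| (hfirst x).symm.trans <|
      (congrArg φ (Fin.castLE_injective hs h)).trans (hfirst x')
  refine ⟨(Equiv.ofInjective _ hinj).extendSubtype, fun v => ?_⟩
  rw [extendSubtype_apply_of_mem _ _ ⟨v, rfl⟩]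
  exact (Fin.castLE_le_castLE_iff hs).mpr (hfirst_le v)

section Gpq

variable (p q : ℕ)

theorem formPerm_castLE_apply_castLE [NeZero p] (z : Fin p) :
    ((List.finRange p).map (Fin.castLE (Nat.le_add_right p q))).formPerm
      (Fin.castLE (Nat.le_add_right p q) z) = Fin.castLE (Nat.le_add_right p q) (z + 1) := by
  set l := (List.finRange p).map (Fin.castLE (Nat.le_add_right p q))
  have hl : l.length = p := by simp [l]
  have hget (k : ℕ) (hk : k < l.length) :
      l[k] = Fin.castLE (Nat.le_add_right p q) ⟨k, hl ▸ hk⟩ := by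
    simp [l]
  have hz : Fin.castLE (Nat.le_add_right p q) z = l[z.val]'(by rw [hl]; exact z.isLt) := by
    rw [hget]
  rw [hz, List.formPerm_apply_getElem _ ((List.nodup_finRange p).map (Fin.castLE_injective _)),
    hget]
  congr 1
  ext
  simp [Fin.val_add]

theorem formPerm_natAdd_apply_castLE (z : Fin p) :
    ((List.finRange q).map (Fin.natAdd p)).formPerm (Fin.castLE (Nat.le_add_right p q) z) =
      Fin.castLE (Nat.le_add_right p q) z := by
  refine List.formPerm_apply_of_notMem ?_
  simp only [List.mem_map, List.mem_finRange, true_and, not_exists]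
  intro y h
  have := congrArg Fin.val h
  simp at this
  omega

theorem exists_apply_castLE_eq_add_of_mem_Gpq [NeZero p] {g : Perm (Fin (p + q))}
    (hg : g ∈ Gpq p q) :
    ∃ i : Fin p, ∀ z : Fin p,
      g (Fin.castLE (Nat.le_add_right p q) z) = Fin.castLE (Nat.le_add_right p q) (z + i) := by
  induction hg using Subgroup.closure_induction with
  | mem g hg =>
    rcases hg with rfl | rfl
    · exact ⟨1, formPerm_castLE_apply_castLE p q⟩
    · exact ⟨0, fun z => by rw [add_zero, formPerm_natAdd_apply_castLE]⟩
  | one => exact ⟨0, fun z => by simp⟩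
  | mul g h _ _ hg hh =>
    obtain ⟨i, hi⟩ := hg
    obtain ⟨j, hj⟩ := hh
    exact ⟨j + i, fun z => by rw [Perm.mul_apply, hj, hi, add_assoc]⟩
  | inv g _ hg =>
    obtain ⟨i, hi⟩ := hg
    exact ⟨-i, fun z => by rw [Perm.inv_eq_iff_eq, hi, neg_add_cancel_right]⟩

end Gpq

theorem natAbs_sub_le_linfDist {n : ℕ} (f g : Perm (Fin n)) (x : Fin n) :
    (((f x).val : ℤ) - (g x).val).natAbs ≤ linfDist f g :=
  le_sup (f := fun i => (((f i).val : ℤ) - (g i).val).natAbs) (mem_univ x)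

theorem le_Lmin_of_forall_exists_le_linfDist {n k : ℕ} {C : Set (Perm (Fin n))}
    (hC : C.Nonempty) (h : ∀ π, ∃ f, ∀ g ∈ conjCode π C, k ≤ linfDist f g) :
    k ≤ Lmin C := by
  refine le_csInf (Set.range_nonempty _) ?_
  rintro _ ⟨π, rfl⟩
  obtain ⟨f, hf⟩ := h π
  have hdist : k ≤ distToCode f (conjCode π C) :=
    le_csInf ((hC.image _).image _) (by rintro _ ⟨g, hg, rfl⟩; exact hf g hg)
  exact hdist.trans (le_csSup (Set.finite_range _).bddAbove (Set.mem_range_self f))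

theorem exists_le_linfDist_conjCode_Gpq {p q s : ℕ} (hs : s < p)
    (hcount : p * ∏ k ∈ range s, (p - (k + 1)) < p ^ s) (π : Perm (Fin (p + q))) :
    ∃ f : Perm (Fin (p + q)), ∀ g ∈ conjCode π (Gpq p q), p - s ≤ linfDist f g := by
  have : NeZero p := ⟨by omega⟩
  let pos (z : Fin p) : Fin (p + q) := π (Fin.castLE (Nat.le_add_right p q) z)
  have hpos : Injective pos := π.injective.comp (Fin.castLE_injective _)
  obtain ⟨u, hu, hu_large⟩ := exists_injective_card_sub_one_sub_le
    (F := fun z => (pos z).val) (Fin.val_injective.comp hpos) (s := s) (by simpa using hs.le)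
  obtain ⟨m, hm⟩ := exists_shift_cover u hu (by simpa using hcount)
  obtain ⟨f, hf⟩ :=
    Fin.exists_perm_apply_le_castLE (hs.le.trans (Nat.le_add_right p q)) (pos ∘ m)
  refine ⟨f, ?_⟩
  rintro _ ⟨g, hg, rfl⟩
  obtain ⟨i, hi⟩ := exists_apply_castLE_eq_add_of_mem_Gpq p q hg
  obtain ⟨v, t, hvt, hmvt⟩ := hm i
  have hcode : (π * g * π⁻¹) (pos (m v)) = pos (u t) := by simp [pos, hi, hmvt]
  have hf_small : (f (pos (m v))).val ≤ v := hf v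
  have hcode_large : p - 1 - t ≤ (pos (u t)).val := by simpa using hu_large t
  refine le_trans ?_ (natAbs_sub_le_linfDist f (π * g * π⁻¹) (pos (m v)))
  rw [hcode]
  omega

theorem stmt_9_general (p q : ℕ) :
    (p : ℤ) - ⌈Real.sqrt (2 * (p : ℝ) * Real.log (p : ℝ) + 2 * (p : ℝ))⌉ ≤
      (Lmin (Gpq p q : Set (Perm (Fin (p + q)))) : ℤ) := by
  set X := 2 * (p : ℝ) * Real.log p + 2 * p
  rcases le_or_gt (p : ℤ) ⌈√X⌉ with hbig | hsmall
  · omega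
  set s := ⌈√X⌉₊
  have hs_eq : (s : ℤ) = ⌈√X⌉ := Int.natCast_ceil_eq_ceil (Real.sqrt_nonneg _)
  have hsp : s < p := by omega
  have hsq : X ≤ (s : ℝ) ^ 2 := (Real.sqrt_le_left (by positivity)).mp (Nat.le_ceil _)
  have hLmin : p - s ≤ Lmin (Gpq p q : Set (Perm (Fin (p + q)))) :=
    le_Lmin_of_forall_exists_le_linfDist ⟨1, one_mem _⟩
      (exists_le_linfDist_conjCode_Gpq hsp (mul_prod_range_sub_lt_pow hsp hsq))
  omega

/-- For all positive integers `p ≥ q`,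
`L_min(G_{p,q}) ≥ p − ⌈√(2p·ln(p) + 2p)⌉`. -/
theorem stmt_9 (p q : ℕ) (hq : 1 ≤ q) (hpq : q ≤ p) :
    (p : ℤ) - ⌈Real.sqrt (2 * (p : ℝ) * Real.log (p : ℝ) + 2 * (p : ℝ))⌉ ≤
      (Lmin (Gpq p q : Set (Perm (Fin (p + q)))) : ℤ) :=
  stmt_9_general p q
end
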